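/- arXiv:0901.1283 — 5 statements merged into one kernel-verified Lean document; each statement's English description precedes it below -/
import Mathlib

section
/- Suppose hypotheses (a2)–(a5) hold, f : ℝ → ℝ is continuous with f ≥ 0 on [0,∞), |f(u) − f(v)| ≤ L|u − v| for all u, v ≥ 0, f(0) = 0, and f(x) < x for every x > 0 (so f has no positive fixed point). Then every solution x of the initial value problem for the distributed-delay equation satisfies lim_{t→∞} x(t) = 0. -/
/-!
A solution stays positive and below `sup |φ|`: at the first time `T` it reaches `0` (or
`sup |φ| + ε`), the equation gives a backward Gronwall inequality on `[0, T]` for `x`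
(or `sup |φ| + ε - x`), which forces it to be `≤ 0` on `[0, T]`, contradicting the initial value.

If `S = limsup x` were positive, then `f ≤ c` on `[0, S + ε]` for some `c < S`, because
`f (y) < y`. Since `h t → ∞`, the delayed mean `∫ f (x s) dμ_t(s)` is eventually `≤ c`, so
`x' ≤ r (c - x)`. As `∫ r = ∞`, `x` falls below `c + δ` and can never exceed it again, hence
`limsup x ≤ c + δ < S`.
-/

open MeasureTheory Filter Set

theorem le_zero_of_le_integral_mul {z : ℝ → ℝ} {K a T : ℝ} (hK : 0 ≤ K) (hz : Continuous z)
    (hle : ∀ t ∈ Icc a T, z t ≤ ∫ u in t..T, K * z u) : ∀ t ∈ Icc a T, z t ≤ 0 := by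
  set w : ℝ → ℝ := fun t => ∫ u in t..T, K * z u
  have hKz : Continuous fun u => K * z u := continuous_const.mul hz
  have hw : ∀ t, HasDerivAt w (-(K * z t)) t := fun t =>
    intervalIntegral.integral_hasDerivAt_left (hKz.intervalIntegrable _ _)
      (hKz.stronglyMeasurableAtFilter _ _) hKz.continuousAt
  -- `exp (K t) * w t` is monotone because `w' = -K z ≥ -K w`, and it vanishes at `T`
  have hew : ∀ t, HasDerivAt (fun t => Real.exp (K * t) * w t)
      (Real.exp (K * t) * (K * (w t - z t))) t := fun t => by
    refine (((hasDerivAt_id t).const_mul K).exp.fun_mul (hw t)).congr_deriv ?_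
    simp only [id, mul_one]
    ring
  have hmono : MonotoneOn (fun t => Real.exp (K * t) * w t) (Icc a T) :=
    monotoneOn_of_hasDerivWithinAt_nonneg (convex_Icc a T)
      (fun t _ => (hew t).continuousAt.continuousWithinAt) (fun t _ => (hew t).hasDerivWithinAt)
      (fun t ht => mul_nonneg (Real.exp_pos _).le
        (mul_nonneg hK (sub_nonneg.2 (hle t (interior_subset ht)))))
  intro t ht
  have hwt : Real.exp (K * t) * w t ≤ 0 := by
    simpa [w] using hmono ht ⟨ht.1.trans ht.2, le_rfl⟩ ht.2
  exact (hle t ht).trans (nonpos_of_mul_nonpos_right hwt (Real.exp_pos _))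

theorem pos_of_integrand_ge_neg_mul {y y' : ℝ → ℝ} {K : ℝ} (hK : 0 ≤ K) (hy : Continuous y)
    (hy0 : 0 < y 0) (hint : ∀ a b, 0 ≤ a → a ≤ b → IntervalIntegrable y' volume a b)
    (heq : ∀ a b, 0 ≤ a → a ≤ b → y b - y a = ∫ u in a..b, y' u)
    (hy' : ∀ T, (∀ t ∈ Icc 0 T, 0 ≤ y t) → ∀ᵐ u, u ∈ Icc 0 T → -(K * y u) ≤ y' u) :
    ∀ t, 0 ≤ t → 0 < y t := by
  intro t₀ ht₀
  by_contra! hneg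
  -- `T` is the first zero of `y`
  obtain ⟨T, ⟨⟨hT0, hTt₀⟩, hyT⟩, hTleast⟩ :=
    (isCompact_Icc.inter_right (isClosed_le hy continuous_const)).exists_isLeast
      ⟨t₀, ⟨ht₀, le_rfl⟩, hneg⟩
  obtain ⟨c, hc, hyc⟩ := intermediate_value_Icc' hT0 hy.continuousOn ⟨hyT, hy0.le⟩
  have hyT0 : y T = 0 := by
    rwa [← le_antisymm hc.2 (hTleast ⟨⟨hc.1, hc.2.trans hTt₀⟩, hyc.le⟩)]
  have hnonneg : ∀ t ∈ Icc 0 T, 0 ≤ y t := by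
    intro t ht
    by_contra! hyt
    exact (hTleast ⟨⟨ht.1, ht.2.trans hTt₀⟩, hyt.le⟩).not_gt
      (ht.2.lt_of_ne (by rintro rfl; exact hyt.ne hyT0))
  have hgronwall : ∀ t ∈ Icc 0 T, y t ≤ ∫ u in t..T, K * y u := by
    intro t ht
    have hmono : ∫ u in t..T, -(K * y u) ≤ ∫ u in t..T, y' u :=
      intervalIntegral.integral_mono_ae_restrict ht.2
        ((continuous_const.mul hy).neg.intervalIntegrable _ _) (hint t T ht.1 ht.2)
        ((ae_restrict_iff' measurableSet_Icc).2 ((hy' T hnonneg).mono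
          fun u hu hut => hu ⟨ht.1.trans hut.1, hut.2⟩))
    rw [intervalIntegral.integral_neg, ← heq t T ht.1 ht.2] at hmono
    linarith
  exact (le_zero_of_le_integral_mul hK hy hgronwall 0 ⟨le_rfl, hT0⟩).not_gt hy0

theorem le_of_le_of_integrand_nonpos {x g : ℝ → ℝ} {c T : ℝ} (hx : Continuous x)
    (heq : ∀ a b, T ≤ a → a ≤ b → x b - x a = ∫ u in a..b, g u)
    (hg : ∀ u, T ≤ u → c < x u → g u ≤ 0) (hT : x T ≤ c) {t : ℝ} (ht : T ≤ t) : x t ≤ c := by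
  by_contra! hxt
  -- `s` is the last time in `[T, t]` with `x s ≤ c`
  obtain ⟨s, ⟨⟨hTs, hst⟩, (hxs : x s ≤ c)⟩, hsgreatest⟩ :=
    (isCompact_Icc.inter_right (isClosed_le hx continuous_const)).exists_isGreatest
      ⟨T, ⟨le_rfl, ht⟩, hT⟩
  have hint : ∫ u in s..t, g u ≤ 0 := by
    rw [intervalIntegral.integral_of_le hst]
    refine setIntegral_nonpos measurableSet_Ioc fun u hu => hg u (hTs.trans hu.1.le) ?_
    by_contra! hxu
    exact (hsgreatest ⟨⟨hTs.trans hu.1.le, hu.2⟩, hxu⟩).not_gt hu.1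
  linarith [heq s t hTs hst]

theorem exists_le_of_integrand_le_neg_mul {x g r : ℝ → ℝ} {c m ε T : ℝ} (hε : 0 < ε)
    (hr : ¬ IntegrableOn r (Ioi T)) (hr_nonneg : ∀ u, T ≤ u → 0 ≤ r u)
    (hr_int : ∀ t, IntervalIntegrable r volume T t) (hxm : ∀ t, T ≤ t → m ≤ x t)
    (hint : ∀ t, T ≤ t → IntervalIntegrable g volume T t)
    (heq : ∀ t, T ≤ t → x t - x T = ∫ u in T..t, g u)
    (hg : ∀ u, T ≤ u → c < x u → g u ≤ -(ε * r u)) : ∃ t, T ≤ t ∧ x t ≤ c := by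
  by_contra! hx
  refine hr (integrableOn_Ioi_of_intervalIntegral_norm_bounded ((x T - m) / ε) T
    (fun n : ℕ => (hr_int (T + n)).1) (tendsto_atTop_add_const_left _ T tendsto_natCast_atTop_atTop)
    (Eventually.of_forall fun n => ?_))
  have hTn : T ≤ T + n := le_add_of_nonneg_right n.cast_nonneg
  have hnorm : ∫ u in T..T + n, ‖r u‖ = ∫ u in T..T + n, r u :=
    intervalIntegral.integral_congr fun u hu => by
      rw [uIcc_of_le hTn] at hu
      exact Real.norm_of_nonneg (hr_nonneg u hu.1)
  have hmono : ∫ u in T..T + n, g u ≤ ∫ u in T..T + n, -(ε * r u) :=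
    intervalIntegral.integral_mono_on hTn (hint _ hTn) ((hr_int _).const_mul ε).neg
      fun u hu => hg u hu.1 (hx u hu.1)
  rw [intervalIntegral.integral_neg, intervalIntegral.integral_const_mul, ← heq _ hTn] at hmono
  rw [hnorm, le_div_iff₀ hε]
  linarith [hxm _ hTn]

theorem eventually_le_of_integrand_le_neg_mul {x g r : ℝ → ℝ} {c m ε T : ℝ} (hε : 0 < ε)
    (hr : ¬ IntegrableOn r (Ioi T)) (hr_nonneg : ∀ u, T ≤ u → 0 ≤ r u)
    (hr_int : ∀ t, IntervalIntegrable r volume T t) (hx : Continuous x)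
    (hxm : ∀ t, T ≤ t → m ≤ x t) (hint : ∀ t, T ≤ t → IntervalIntegrable g volume T t)
    (heq : ∀ a b, T ≤ a → a ≤ b → x b - x a = ∫ u in a..b, g u)
    (hg : ∀ u, T ≤ u → c < x u → g u ≤ -(ε * r u)) : ∀ᶠ t in atTop, x t ≤ c := by
  obtain ⟨T', hTT', hxT'⟩ := exists_le_of_integrand_le_neg_mul hε hr hr_nonneg hr_int hxm hint
    (fun t ht => heq T t le_rfl ht) hg
  refine eventually_atTop.2 ⟨T', fun t ht => le_of_le_of_integrand_nonpos hx
    (fun a b ha hab => heq a b (hTT'.trans ha) hab) (fun u hu hxu => ?_) hxT' ht⟩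
  exact (hg u (hTT'.trans hu) hxu).trans
    (neg_nonpos.2 (mul_nonneg hε.le (hr_nonneg u (hTT'.trans hu))))

theorem exists_lt_forall_le_of_lt_self {f : ℝ → ℝ} (hf : Continuous f) (hf0 : f 0 = 0)
    (hf_below : ∀ y, 0 < y → f y < y) {S : ℝ} (hS : 0 < S) :
    ∃ c < S, ∃ ε > 0, ∀ y ∈ Icc 0 (S + ε), f y ≤ c := by
  obtain ⟨y₀, hy₀, hmax⟩ :=
    isCompact_Icc.exists_isMaxOn (nonempty_Icc.2 hS.le) (hf.continuousOn (s := Icc 0 S))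
  have hfy₀ : f y₀ < S := by
    rcases hy₀.1.eq_or_lt with h0 | hpos
    · rwa [← h0, hf0]
    · exact (hf_below y₀ hpos).trans_le hy₀.2
  have hfS : f S < (f y₀ + S) / 2 := by linarith [show f S ≤ f y₀ from hmax ⟨hS.le, le_rfl⟩]
  obtain ⟨ε, hε, hball⟩ := Metric.eventually_nhds_iff.1
    (hf.continuousAt.eventually_lt continuousAt_const hfS)
  refine ⟨(f y₀ + S) / 2, by linarith, ε / 2, half_pos hε, fun y hy => ?_⟩
  rcases le_total y S with hyS | hyS
  · linarith [show f y ≤ f y₀ from hmax ⟨hy.1, hyS⟩]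
  · refine (hball ?_).le
    rw [Real.dist_eq, abs_of_nonneg (sub_nonneg.2 hyS)]
    linarith [hy.2]

theorem tendsto_zero_of_eventually_comp_le {α : Type*} {l : Filter α} [l.NeBot] {f : ℝ → ℝ}
    {x : α → ℝ} (hf : Continuous f) (hf0 : f 0 = 0) (hf_below : ∀ y, 0 < y → f y < y)
    (hx_nonneg : ∀ t, 0 ≤ x t) (hx_bdd : ∃ M, ∀ t, x t ≤ M)
    (himp : ∀ c, 0 ≤ c → (∀ᶠ t in l, f (x t) ≤ c) → ∀ δ > 0, ∀ᶠ t in l, x t ≤ c + δ) :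
    Tendsto x l (nhds 0) := by
  obtain ⟨M, hM⟩ := hx_bdd
  have hbdd : IsBoundedUnder (· ≤ ·) l x := isBoundedUnder_of ⟨M, hM⟩
  have hcobdd : IsCoboundedUnder (· ≤ ·) l x :=
    (isBoundedUnder_of ⟨0, hx_nonneg⟩ : IsBoundedUnder (· ≥ ·) l x).isCoboundedUnder_le
  have hS : limsup x l ≤ 0 := by
    by_contra! hS
    obtain ⟨c, hcS, ε, hε, hfc⟩ := exists_lt_forall_le_of_lt_self hf hf0 hf_below hS
    have hfx : ∀ᶠ t in l, f (x t) ≤ c :=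
      (eventually_lt_of_limsup_lt (lt_add_of_pos_right _ hε) hbdd).mono
        fun t ht => hfc (x t) ⟨hx_nonneg t, ht.le⟩
    have hc : 0 ≤ c := hf0 ▸ hfc 0 ⟨le_rfl, by linarith⟩
    have := limsup_le_of_le hcobdd (himp c hc hfx ((limsup x l - c) / 2) (by linarith))
    linarith
  exact tendsto_order.2 ⟨fun a ha => Eventually.of_forall fun t => ha.trans_le (hx_nonneg t),
    fun a ha => eventually_lt_of_limsup_lt (hS.trans_lt ha) hbdd⟩

theorem exists_abs_le_on_Iic {x : ℝ → ℝ} (hx : Continuous x) {C : ℝ} (hC : ∀ t ≤ 0, |x t| ≤ C)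
    (T : ℝ) : ∃ B, ∀ t ≤ T, |x t| ≤ B := by
  obtain ⟨B, hB⟩ := isCompact_Icc.exists_bound_of_continuousOn (hx.continuousOn (s := Icc 0 T))
  refine ⟨max C B, fun t ht => ?_⟩
  rcases le_total t 0 with ht0 | ht0
  · exact (hC t ht0).trans (le_max_left _ _)
  · exact (hB t ⟨ht0, ht⟩).trans (le_max_right _ _)

theorem Continuous.exists_abs_comp_le {f x : ℝ → ℝ} (hf : Continuous f) {s : Set ℝ} {B : ℝ}
    (hB : ∀ t ∈ s, |x t| ≤ B) : ∃ B', ∀ t ∈ s, |f (x t)| ≤ B' := by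
  obtain ⟨B', hB'⟩ := isCompact_Icc.exists_bound_of_continuousOn (hf.continuousOn (s := Icc (-B) B))
  exact ⟨B', fun t ht => hB' (x t) (abs_le.1 (hB t ht))⟩

theorem locallyIntegrable_of_nonneg_of_ae_le {X : Type*} [MeasurableSpace X]
    [TopologicalSpace X] [LocallyCompactSpace X] {ν : Measure X} [IsFiniteMeasureOnCompacts ν]
    {r : X → ℝ} (hr : Measurable r) (hr_nonneg : ∀ u, 0 ≤ r u) {C : ℝ} (hC : ∀ᵐ u ∂ν, r u ≤ C) :
    LocallyIntegrable r ν :=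
  locallyIntegrable_iff.2 fun _ hK =>
    Measure.integrableOn_of_bounded hK.measure_lt_top.ne hr.aestronglyMeasurable
      (ae_restrict_of_ae (hC.mono fun u hu => (Real.norm_of_nonneg (hr_nonneg u)).trans_le hu))

theorem integral_le_of_ae_le_of_nonneg {α : Type*} [MeasurableSpace α] {ν : Measure α}
    [IsProbabilityMeasure ν] {G : α → ℝ} {c : ℝ} (hc : 0 ≤ c) (hG : ∀ᵐ y ∂ν, G y ≤ c) :
    ∫ y, G y ∂ν ≤ c := by
  -- `0 ≤ c` covers the junk value `0` of the integral of a non-integrable `G`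
  by_cases hint : Integrable G ν
  · simpa using integral_mono_ae hint (integrable_const c) hG
  · rw [integral_undef hint]
    exact hc

/-- Hypothesis (a4) on the measures `μ_t`, `t ≥ 0`. -/
structure IsDelayKernel (μ : ℝ → Measure ℝ) (h : ℝ → ℝ) : Prop where
  isProbabilityMeasure : ∀ t, 0 ≤ t → IsProbabilityMeasure (μ t)
  ae_mem_Icc : ∀ t, 0 ≤ t → ∀ᵐ s ∂μ t, s ∈ Icc (h t) t
  measurable_integral : ∀ g : ℝ → ℝ, Measurable g → (∃ C, ∀ y, |g y| ≤ C) →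
    Measurable fun t => ∫ s, g s ∂μ t

noncomputable def delayRhs (f r : ℝ → ℝ) (μ : ℝ → Measure ℝ) (x : ℝ → ℝ) (u : ℝ) : ℝ :=
  r u * (∫ s, f (x s) ∂μ u - x u)

namespace IsDelayKernel

variable {f r x h : ℝ → ℝ} {μ : ℝ → Measure ℝ}

theorem integral_le (hk : IsDelayKernel μ h) {G : ℝ → ℝ} {t c : ℝ} (ht : 0 ≤ t) (hc : 0 ≤ c)
    (hG : ∀ s ∈ Icc (h t) t, G s ≤ c) : ∫ s, G s ∂μ t ≤ c :=
  haveI := hk.isProbabilityMeasure t ht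
  integral_le_of_ae_le_of_nonneg hc ((hk.ae_mem_Icc t ht).mono hG)

theorem integral_nonneg (hk : IsDelayKernel μ h) {G : ℝ → ℝ} {t : ℝ} (ht : 0 ≤ t)
    (hG : ∀ s ∈ Icc (h t) t, 0 ≤ G s) : 0 ≤ ∫ s, G s ∂μ t :=
  integral_nonneg_of_ae ((hk.ae_mem_Icc t ht).mono hG)

theorem abs_integral_le (hk : IsDelayKernel μ h) {G : ℝ → ℝ} {t B : ℝ} (ht : 0 ≤ t)
    (hG : ∀ s ≤ t, |G s| ≤ B) : |∫ s, G s ∂μ t| ≤ B := by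
  have := hk.isProbabilityMeasure t ht
  simpa using norm_integral_le_of_norm_le_const
    ((hk.ae_mem_Icc t ht).mono fun s hs => (show ‖G s‖ ≤ B from hG s hs.2))

theorem aestronglyMeasurable_integral (hk : IsDelayKernel μ h) {G : ℝ → ℝ} (hG : Continuous G)
    {T B : ℝ} (hB : ∀ s ≤ T, |G s| ≤ B) :
    AEStronglyMeasurable (fun t => ∫ s, G s ∂μ t) (volume.restrict (Icc 0 T)) := by
  -- on `[0, T]` the kernel only sees `(-∞, T]`, where `G` agrees with a bounded function
  have hmeas := hk.measurable_integral (fun s => G (min s T))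
    (hG.comp (continuous_id.min continuous_const)).measurable ⟨B, fun s => hB _ (min_le_right s T)⟩
  refine hmeas.aestronglyMeasurable.congr ((ae_restrict_iff' measurableSet_Icc).2
    (ae_of_all _ fun t ht => integral_congr_ae ((hk.ae_mem_Icc t ht.1).mono fun s hs => ?_)))
  simp only [min_eq_left (hs.2.trans ht.2)]

theorem intervalIntegrable_delayRhs (hk : IsDelayKernel μ h) (hf : Continuous f)
    (hr : LocallyIntegrable r) (hx : Continuous x) {C : ℝ} (hC : ∀ t ≤ 0, |x t| ≤ C)
    {a b : ℝ} (ha : 0 ≤ a) (hab : a ≤ b) : IntervalIntegrable (delayRhs f r μ x) volume a b := by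
  obtain ⟨B, hB⟩ := exists_abs_le_on_Iic hx hC b
  obtain ⟨B', hB'⟩ := hf.exists_abs_comp_le (s := Iic b) hB
  have hbound : ∀ᵐ u ∂volume.restrict (Icc 0 b), ‖∫ s, f (x s) ∂μ u - x u‖ ≤ B' + B :=
    (ae_restrict_iff' measurableSet_Icc).2 (ae_of_all _ fun u hu => (abs_sub _ _).trans
      (add_le_add (hk.abs_integral_le hu.1 fun s hs => hB' s (hs.trans hu.2)) (hB u hu.2)))
  have hI : IntegrableOn (delayRhs f r μ x) (Icc 0 b) :=
    (hr.integrableOn_isCompact isCompact_Icc).mul_bdd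
      ((hk.aestronglyMeasurable_integral (hf.comp hx) hB').sub
        hx.aestronglyMeasurable.restrict) hbound
  exact (intervalIntegrable_iff_integrableOn_Icc_of_le hab).2
    (hI.mono_set (Icc_subset_Icc_left ha))

theorem pos_of_integral_delayRhs (hk : IsDelayKernel μ h) (hf : ∀ y, 0 ≤ y → 0 ≤ f y)
    (hr_nonneg : ∀ u, 0 ≤ r u) {C : ℝ} (hC : ∀ᵐ u, r u ≤ C) (hx : Continuous x)
    (hx_neg : ∀ t ≤ 0, 0 ≤ x t) (hx0 : 0 < x 0)
    (hint : ∀ a b, 0 ≤ a → a ≤ b → IntervalIntegrable (delayRhs f r μ x) volume a b)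
    (heq : ∀ a b, 0 ≤ a → a ≤ b → x b - x a = ∫ u in a..b, delayRhs f r μ x u) :
    ∀ t, 0 ≤ t → 0 < x t := by
  have hC0 : 0 ≤ C := hC.exists.elim fun u hu => (hr_nonneg u).trans hu
  refine pos_of_integrand_ge_neg_mul hC0 hx hx0 hint heq fun T hT => hC.mono fun u hru hu => ?_
  have hxT : ∀ s ≤ T, 0 ≤ x s := fun s hs =>
    (le_total s 0).elim (hx_neg s) fun hs0 => hT s ⟨hs0, hs⟩
  have hF : 0 ≤ ∫ s, f (x s) ∂μ u :=
    hk.integral_nonneg hu.1 fun s hs => hf _ (hxT s (hs.2.trans hu.2))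
  have hrx : r u * x u ≤ C * x u := mul_le_mul_of_nonneg_right hru (hxT u hu.2)
  have hrF : 0 ≤ r u * ∫ s, f (x s) ∂μ u := mul_nonneg (hr_nonneg u) hF
  simp only [delayRhs]
  linarith

theorem le_of_integral_delayRhs (hk : IsDelayKernel μ h) (hf : ∀ y, 0 ≤ y → f y ≤ y)
    (hr_nonneg : ∀ u, 0 ≤ r u) {C : ℝ} (hC : ∀ᵐ u, r u ≤ C) (hx : Continuous x)
    (hx_nonneg : ∀ t, 0 ≤ x t) {M : ℝ} (hM : ∀ t ≤ 0, x t ≤ M)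
    (hint : ∀ a b, 0 ≤ a → a ≤ b → IntervalIntegrable (delayRhs f r μ x) volume a b)
    (heq : ∀ a b, 0 ≤ a → a ≤ b → x b - x a = ∫ u in a..b, delayRhs f r μ x u) :
    ∀ t, x t ≤ M := by
  have hC0 : 0 ≤ C := hC.exists.elim fun u hu => (hr_nonneg u).trans hu
  intro t
  refine le_of_forall_pos_le_add fun ε hε => ?_
  rcases le_total t 0 with ht | ht
  · linarith [hM t ht]
  suffices 0 < M + ε - x t by linarith
  refine pos_of_integrand_ge_neg_mul (y := fun t => M + ε - x t)
    (y' := fun u => -delayRhs f r μ x u) hC0 (continuous_const.sub hx)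
    (by linarith [hM 0 le_rfl]) (fun a b ha hab => (hint a b ha hab).neg)
    (fun a b ha hab => by rw [intervalIntegral.integral_neg, ← heq a b ha hab]; ring)
    (fun T hT => hC.mono fun u hru hu => ?_) t ht
  have hxT : ∀ s ≤ T, x s ≤ M + ε := fun s hs => (le_total s 0).elim
    (fun hs0 => by linarith [hM s hs0]) fun hs0 => by linarith [hT s ⟨hs0, hs⟩]
  have hF : ∫ s, f (x s) ∂μ u ≤ M + ε :=
    hk.integral_le hu.1 (by linarith [hx_nonneg 0, hM 0 le_rfl])
      fun s hs => (hf _ (hx_nonneg s)).trans (hxT s (hs.2.trans hu.2))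
  have hrF : r u * (∫ s, f (x s) ∂μ u - x u) ≤ r u * (M + ε - x u) :=
    mul_le_mul_of_nonneg_left (by linarith) (hr_nonneg u)
  have hrC : r u * (M + ε - x u) ≤ C * (M + ε - x u) :=
    mul_le_mul_of_nonneg_right hru (by linarith [hxT u hu.2])
  simp only [delayRhs]
  linarith

theorem eventually_le_add_of_integral_delayRhs (hk : IsDelayKernel μ h)
    (hh : Tendsto h atTop atTop) (hr_nonneg : ∀ u, 0 ≤ r u) (hr : LocallyIntegrable r)
    (hr_div : ¬ IntegrableOn r (Ici 0)) (hx : Continuous x) (hx_nonneg : ∀ t, 0 ≤ x t)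
    (hint : ∀ a b, 0 ≤ a → a ≤ b → IntervalIntegrable (delayRhs f r μ x) volume a b)
    (heq : ∀ a b, 0 ≤ a → a ≤ b → x b - x a = ∫ u in a..b, delayRhs f r μ x u)
    {c δ : ℝ} (hc : 0 ≤ c) (hδ : 0 < δ) (hfx : ∀ᶠ t in atTop, f (x t) ≤ c) :
    ∀ᶠ t in atTop, x t ≤ c + δ := by
  obtain ⟨T₁, hT₁⟩ := eventually_atTop.1 hfx
  obtain ⟨T₂, hT₂⟩ := eventually_atTop.1 (hh.eventually_ge_atTop T₁)
  set T := max T₂ 0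
  have hF : ∀ u, T ≤ u → ∫ s, f (x s) ∂μ u ≤ c := fun u hu =>
    hk.integral_le ((le_max_right _ _).trans hu) hc fun s hs =>
      hT₁ s ((hT₂ u ((le_max_left _ _).trans hu)).trans hs.1)
  have hr_div' : ¬ IntegrableOn r (Ioi T) := fun hT => hr_div <|
    ((hr.integrableOn_isCompact (isCompact_Icc (a := 0) (b := T))).union hT).mono_set
      fun u hu => (le_or_gt u T).elim (fun h => Or.inl ⟨hu, h⟩) Or.inr
  refine eventually_le_of_integrand_le_neg_mul hδ hr_div' (fun u _ => hr_nonneg u)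
    (fun t => (hr.integrableOn_isCompact isCompact_uIcc).intervalIntegrable) hx
    (fun t _ => hx_nonneg t) (fun t ht => hint T t (le_max_right _ _) ht)
    (fun a b ha hab => heq a b ((le_max_right _ _).trans ha) hab) fun u hu hxu => ?_
  have := mul_le_mul_of_nonneg_left (show ∫ s, f (x s) ∂μ u - x u ≤ -δ by linarith [hF u hu])
    (hr_nonneg u)
  simp only [delayRhs]
  linarith

end IsDelayKernel

theorem distributed_delay_extinction_general
    (f : ℝ → ℝ)
    (h r : ℝ → ℝ) (μ : ℝ → Measure ℝ) (φ : ℝ → ℝ)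
    (hf_cont : Continuous f)
    (hf_nonneg : ∀ y : ℝ, 0 ≤ y → 0 ≤ f y)
    (hf_zero : f 0 = 0)
    (hf_below : ∀ y : ℝ, 0 < y → f y < y)
    (hh_tend : Tendsto h atTop atTop)
    (hr_meas : Measurable r)
    (hr_nonneg : ∀ t : ℝ, 0 ≤ r t)
    (hr_bdd : ∃ C : ℝ, ∀ᵐ t ∂volume, r t ≤ C)
    (hr_div : ¬ IntegrableOn r (Ici (0 : ℝ)))
    (hμ_prob : ∀ t : ℝ, 0 ≤ t → IsProbabilityMeasure (μ t))
    (hμ_supp : ∀ t : ℝ, 0 ≤ t → μ t (Icc (h t) t)ᶜ = 0)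
    (hμ_meas : ∀ g : ℝ → ℝ, Measurable g → (∃ C : ℝ, ∀ y : ℝ, |g y| ≤ C) →
      Measurable (fun t => ∫ s, g s ∂(μ t)))
    (hφ_bdd : ∃ C : ℝ, ∀ t : ℝ, t ≤ 0 → |φ t| ≤ C)
    (hφ_nonneg : ∀ t : ℝ, t ≤ 0 → 0 ≤ φ t)
    (hφ_pos : 0 < φ 0)
    (x : ℝ → ℝ)
    (hx_cont : Continuous x)
    (hx_init : ∀ t : ℝ, t ≤ 0 → x t = φ t)
    (hx_sol : ∀ t : ℝ, 0 ≤ t →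
      x t = φ 0 + ∫ u in (0:ℝ)..t, r u * ((∫ s, f (x s) ∂(μ u)) - x u))
    :
    Tendsto x atTop (nhds 0) := by
  obtain ⟨C₀, hC₀⟩ := hφ_bdd
  obtain ⟨C, hC⟩ := hr_bdd
  have hk : IsDelayKernel μ h := ⟨hμ_prob, fun t ht => ae_iff.2 (hμ_supp t ht), hμ_meas⟩
  have hr := locallyIntegrable_of_nonneg_of_ae_le hr_meas hr_nonneg hC
  have hx_abs : ∀ t ≤ 0, |x t| ≤ C₀ := fun t ht => hx_init t ht ▸ hC₀ t ht
  have hint : ∀ a b, 0 ≤ a → a ≤ b → IntervalIntegrable (delayRhs f r μ x) volume a b :=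
    fun a b ha hab => hk.intervalIntegrable_delayRhs hf_cont hr hx_cont hx_abs ha hab
  have heq : ∀ a b, 0 ≤ a → a ≤ b → x b - x a = ∫ u in a..b, delayRhs f r μ x u :=
    fun a b ha hab => by
      rw [hx_sol b (ha.trans hab), hx_sol a ha, add_sub_add_left_eq_sub]
      exact intervalIntegral.integral_interval_sub_left (hint 0 b le_rfl (ha.trans hab))
        (hint 0 a le_rfl ha)
  have hx_neg : ∀ t ≤ 0, 0 ≤ x t := fun t ht => hx_init t ht ▸ hφ_nonneg t ht
  have hx_pos := hk.pos_of_integral_delayRhs hf_nonneg hr_nonneg hC hx_cont hx_neg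
    (hx_init 0 le_rfl ▸ hφ_pos) hint heq
  have hx_nonneg : ∀ t, 0 ≤ x t := fun t =>
    (le_total t 0).elim (hx_neg t) fun ht => (hx_pos t ht).le
  have hf_le : ∀ y, 0 ≤ y → f y ≤ y := fun y hy =>
    hy.eq_or_lt.elim (fun h0 => h0 ▸ hf_zero.le) fun hy => (hf_below y hy).le
  have hx_le := hk.le_of_integral_delayRhs hf_le hr_nonneg hC hx_cont hx_nonneg
    (fun t ht => (le_abs_self _).trans (hx_abs t ht)) hint heq
  exact tendsto_zero_of_eventually_comp_le hf_cont hf_zero hf_below hx_nonneg ⟨C₀, hx_le⟩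
    fun c hc hfx δ hδ => hk.eventually_le_add_of_integral_delayRhs hh_tend hr_nonneg hr hr_div
      hx_cont hx_nonneg hint heq hc hδ hfx

theorem distributed_delay_extinction
    (f : ℝ → ℝ) (L : ℝ) (hL : 0 ≤ L)
    (h r : ℝ → ℝ) (μ : ℝ → Measure ℝ) (φ : ℝ → ℝ)
    (hf_cont : Continuous f)
    (hf_nonneg : ∀ y : ℝ, 0 ≤ y → 0 ≤ f y)
    (hf_lip : ∀ u v : ℝ, 0 ≤ u → 0 ≤ v → |f u - f v| ≤ L * |u - v|)
    (hf_zero : f 0 = 0)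
    (hf_below : ∀ y : ℝ, 0 < y → f y < y)
    (hh_meas : Measurable h)
    (hh_le : ∀ t : ℝ, 0 ≤ t → h t ≤ t)
    (hh_tend : Tendsto h atTop atTop)
    (hr_meas : Measurable r)
    (hr_nonneg : ∀ t : ℝ, 0 ≤ r t)
    (hr_bdd : ∃ C : ℝ, ∀ᵐ t ∂volume, r t ≤ C)
    (hr_div : ¬ IntegrableOn r (Ici (0 : ℝ)))
    (hμ_prob : ∀ t : ℝ, 0 ≤ t → IsProbabilityMeasure (μ t))
    (hμ_supp : ∀ t : ℝ, 0 ≤ t → μ t (Icc (h t) t)ᶜ = 0)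
    (hμ_meas : ∀ g : ℝ → ℝ, Measurable g → (∃ C : ℝ, ∀ y : ℝ, |g y| ≤ C) →
      Measurable (fun t => ∫ s, g s ∂(μ t)))
    (hφ_cont : ContinuousOn φ (Iic (0 : ℝ)))
    (hφ_bdd : ∃ C : ℝ, ∀ t : ℝ, t ≤ 0 → |φ t| ≤ C)
    (hφ_nonneg : ∀ t : ℝ, t ≤ 0 → 0 ≤ φ t)
    (hφ_pos : 0 < φ 0)
    (x : ℝ → ℝ)
    (hx_cont : Continuous x)
    (hx_init : ∀ t : ℝ, t ≤ 0 → x t = φ t)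
    (hx_sol : ∀ t : ℝ, 0 ≤ t →
      x t = φ 0 + ∫ u in (0:ℝ)..t, r u * ((∫ s, f (x s) ∂(μ u)) - x u))
    :
    Tendsto x atTop (nhds 0) :=
  distributed_delay_extinction_general f h r μ φ hf_cont hf_nonneg hf_zero hf_below hh_tend hr_meas
    hr_nonneg hr_bdd hr_div hμ_prob hμ_supp hμ_meas hφ_bdd hφ_nonneg hφ_pos x hx_cont hx_init hx_sol
end

section
/- Suppose hypotheses (a1), (a2), (a4), (a5) hold, r > 0 is a positive constant, and sup_{t ≥ 0} (t − h(t)) < 1/(r·(L + 1)), where L is the Lipschitz constant of f from (a1). Then every solution x of the initial value problem for the equation x'(t) = r·(∫_ℝ f(x(s)) dμ_t(s) − x(t)) satisfies lim_{t→∞} x(t) = K. -/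
/-!
With `Y u = ∫ f (x s) dμ_u`, the solution satisfies `x' = r (Y - x)`, and `Y u` is an average of
`f ∘ x` over the window `[u - c, u]`. Comparison with the linear equation (variation of constants)
shows that `x` stays positive and bounded, and is eventually bounded away from `0`. If
`W = limsup |x - K|` were positive, take a time at which `x` is close to `K + W` (or `K - W`).
Since `|x'| ≤ r (L + 1) (W + ε)` eventually and `r c (L + 1) < 1`, the delay windows just before
that time stay on the same side of `K`, at a distance of order `(1 - r c (L + 1)) W`. There `f`
pushes `x` back towards `K` by a fixed amount, so `x` cannot come close to `K ± W`.
-/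

open MeasureTheory Filter Set Real Topology

def IsRelaxation (r a : ℝ) (x Y : ℝ → ℝ) : Prop :=
  ∀ s t, a ≤ s → s ≤ t →
    IntervalIntegrable Y volume s t ∧ x t = x s + ∫ u in s..t, r * (Y u - x u)

namespace IsRelaxation

variable {r a s t : ℝ} {x Y : ℝ → ℝ}

theorem const_sub (hrel : IsRelaxation r a x Y) (b : ℝ) :
    IsRelaxation r a (fun t => b - x t) (fun u => b - Y u) := by
  intro s t hs hst
  obtain ⟨hY, hxt⟩ := hrel s t hs hst
  refine ⟨intervalIntegrable_const.sub hY, ?_⟩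
  have : ∫ u in s..t, r * ((b - Y u) - (b - x u)) = -∫ u in s..t, r * (Y u - x u) := by
    rw [← intervalIntegral.integral_neg]; congr 1; ext u; ring
  simp only [this, hxt]; ring

theorem exp_mul_sub_exp_mul (hx : Continuous x) (hrel : IsRelaxation r a x Y) (hs : a ≤ s)
    (hst : s ≤ t) :
    exp (r * t) * x t - exp (r * s) * x s = ∫ u in s..t, r * exp (r * u) * Y u := by
  have hg : IntervalIntegrable (fun u => r * (Y u - x u)) volume s t :=
    ((hrel s t hs hst).1.sub (hx.intervalIntegrable s t)).const_mul r
  set F := fun v => x s + ∫ u in s..v, r * (Y u - x u)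
  have hF : ∀ v ∈ Icc s t, F v = x v := fun v hv => ((hrel s v hs hv.1).2).symm
  have hFac : AbsolutelyContinuousOnInterval F s t :=
    (contDiffOn_const.absolutelyContinuousOnInterval).add
      (hg.absolutelyContinuousOnInterval_intervalIntegral left_mem_uIcc)
  have hEac : AbsolutelyContinuousOnInterval (fun u => exp (r * u)) s t :=
    (by fun_prop : ContDiff ℝ 1 fun u => exp (r * u)).contDiffOn.absolutelyContinuousOnInterval
  rw [← hF t ⟨hst, le_rfl⟩, ← hF s ⟨le_rfl, hst⟩, ← hEac.integral_deriv_mul_eq_sub hFac]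
  refine intervalIntegral.integral_congr_ae ?_
  filter_upwards [hg.ae_hasDerivAt_integral] with u hu hu'
  have huI : u ∈ Icc s t := by rw [uIoc_of_le hst] at hu'; exact Ioc_subset_Icc_self hu'
  have hdF : deriv F u = r * (Y u - x u) :=
    ((hu (uIoc_subset_uIcc hu') s left_mem_uIcc).const_add (x s)).deriv
  have hdE : deriv (fun u => exp (r * u)) u = r * exp (r * u) := by
    simpa [mul_comm] using (((hasDerivAt_id u).const_mul r).exp).deriv
  rw [hdF, hdE, hF u huI]; ring

theorem sub_mul_exp_le (hr : 0 ≤ r) (hx : Continuous x) (hrel : IsRelaxation r a x Y)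
    (hs : a ≤ s) (hst : s ≤ t) {ℓ : ℝ} (hY : ∀ u ∈ Icc s t, ℓ ≤ Y u) :
    (x s - ℓ) * exp (-(r * (t - s))) ≤ x t - ℓ := by
  have hE : Continuous fun u => r * exp (r * u) := by fun_prop
  have hconst : ∫ u in s..t, r * exp (r * u) * ℓ = ℓ * (exp (r * t) - exp (r * s)) := by
    rw [intervalIntegral.integral_mul_const, intervalIntegral.integral_eq_sub_of_hasDerivAt
      (f := fun u => exp (r * u)) (fun u _ => by
        simpa [mul_comm] using ((hasDerivAt_id u).const_mul r).exp) (hE.intervalIntegrable s t)]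
    ring
  have hmono : ∫ u in s..t, r * exp (r * u) * ℓ ≤ ∫ u in s..t, r * exp (r * u) * Y u :=
    intervalIntegral.integral_mono_on hst ((hE.mul continuous_const).intervalIntegrable s t)
      ((hrel s t hs hst).1.continuousOn_mul hE.continuousOn)
      fun u hu => mul_le_mul_of_nonneg_left (hY u hu) (by positivity)
  rw [hconst, ← hrel.exp_mul_sub_exp_mul hx hs hst] at hmono
  rw [show -(r * (t - s)) = r * s - r * t by ring, exp_sub, mul_div_assoc', div_le_iff₀ (exp_pos _)]
  linarith

theorem le_sub_mul_one_sub_exp (hr : 0 ≤ r) (hx : Continuous x) (hrel : IsRelaxation r a x Y)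
    (hs : a ≤ s) (hst : s ≤ t) {V γ : ℝ} (hxs : x s ≤ V) (hY : ∀ u ∈ Icc s t, Y u ≤ V - γ) :
    x t ≤ V - γ * (1 - exp (-(r * (t - s)))) := by
  have h := (hrel.const_sub V).sub_mul_exp_le hr (by fun_prop) hs hst (ℓ := γ)
    fun u hu => by linarith [hY u hu]
  nlinarith [mul_nonneg (sub_nonneg.2 hxs) (exp_pos (-(r * (t - s)))).le]

theorem abs_sub_le_mul (hr : 0 ≤ r) (hrel : IsRelaxation r a x Y)
    (hs : a ≤ s) (hst : s ≤ t) {D : ℝ} (hD : ∀ u ∈ Icc s t, |Y u - x u| ≤ D) :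
    |x t - x s| ≤ r * D * (t - s) := by
  have h := intervalIntegral.norm_integral_le_of_norm_le_const (a := s) (b := t)
    (f := fun u => r * (Y u - x u)) (C := r * D) fun u hu => by
      rw [uIoc_of_le hst] at hu
      rw [Real.norm_eq_abs, abs_mul, abs_of_nonneg hr]
      exact mul_le_mul_of_nonneg_left (hD u (Ioc_subset_Icc_self hu)) hr
  rw [Real.norm_eq_abs, abs_of_nonneg (sub_nonneg.2 hst)] at h
  rw [show x t - x s = ∫ u in s..t, r * (Y u - x u) by linarith [(hrel s t hs hst).2]]
  linarith

end IsRelaxation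

theorem Continuous.forall_pos_of_nonneg_imp_pos {z : ℝ → ℝ} (hz : Continuous z) {a : ℝ}
    (ha : 0 < z a) (hstep : ∀ t, a < t → (∀ s ∈ Icc a t, 0 ≤ z s) → 0 < z t) :
    ∀ t, a ≤ t → 0 < z t := by
  by_contra! hneg
  obtain ⟨b, hab, hb⟩ := hneg
  set S := {s ∈ Icc a b | z s ≤ 0}
  have hS : IsCompact S := isCompact_Icc.inter_right (isClosed_le hz continuous_const)
  have ht₀ : sInf S ∈ S := hS.sInf_mem ⟨b, ⟨hab, le_rfl⟩, hb⟩
  have hat₀ : a < sInf S := lt_of_le_of_ne ht₀.1.1 fun h => by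
    rw [← h] at ht₀; linarith [ht₀.2]
  have hbefore : ∀ s ∈ Ico a (sInf S), 0 ≤ z s := fun s hs => by
    by_contra! h
    exact hs.2.not_ge (csInf_le hS.bddBelow ⟨⟨hs.1, hs.2.le.trans ht₀.1.2⟩, h.le⟩)
  have hcl : Icc a (sInf S) ⊆ {s | 0 ≤ z s} := by
    rw [← closure_Ico hat₀.ne]
    exact closure_minimal hbefore (isClosed_le continuous_const hz)
  exact (hstep _ hat₀ hcl).not_ge ht₀.2

theorem tendsto_of_forall_eventually_abs_sub_le {α : Type*} {l : Filter α} {x : α → ℝ}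
    {K B : ℝ} (hB : ∀ᶠ t in l, |x t - K| ≤ B)
    (hstep : ∀ W > 0, (∀ ε > 0, ∀ᶠ t in l, |x t - K| ≤ W + ε) →
      ∃ ε > 0, ∀ᶠ t in l, |x t - K| ≤ W - ε) :
    Tendsto x l (𝓝 K) := by
  rcases l.eq_or_neBot with rfl | hl
  · exact tendsto_bot
  set d := fun t => |x t - K|
  have hbdd : IsBoundedUnder (· ≤ ·) l d := isBoundedUnder_of_eventually_le hB
  have hcobdd : IsCoboundedUnder (· ≤ ·) l d := isCoboundedUnder_le_of_le l fun t => abs_nonneg _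
  have hev : ∀ ε > 0, ∀ᶠ t in l, d t < limsup d l + ε := fun ε hε =>
    eventually_lt_of_limsup_lt (by linarith) hbdd
  have hW : limsup d l ≤ 0 := by
    by_contra! hW
    obtain ⟨ε, hε, h⟩ := hstep _ hW fun ε hε => (hev ε hε).mono fun t ht => ht.le
    linarith [limsup_le_of_le hcobdd h]
  refine Metric.tendsto_nhds.2 fun ε hε => (hev ε hε).mono fun t ht => ?_
  rw [Real.dist_eq]
  linarith

def IsWindowAverage (c : ℝ) (g Y : ℝ → ℝ) : Prop :=
  ∀ u, 0 ≤ u → Y u ∈ closedConvexHull ℝ (g '' Icc (u - c) u)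

namespace IsWindowAverage

variable {c u : ℝ} {g Y : ℝ → ℝ}

theorem mem (h : IsWindowAverage c g Y) (hu : 0 ≤ u) {S : Set ℝ} (hS : Convex ℝ S)
    (hSc : IsClosed S) (hg : ∀ σ ∈ Icc (u - c) u, g σ ∈ S) : Y u ∈ S :=
  closedConvexHull_min (image_subset_iff.2 hg) hS hSc (h u hu)

theorem const_sub (h : IsWindowAverage c g Y) (b : ℝ) :
    IsWindowAverage c (fun σ => b - g σ) (fun u => b - Y u) := fun u hu =>
  h.mem (S := (fun y => b - y) ⁻¹' closedConvexHull ℝ ((fun σ => b - g σ) '' Icc (u - c) u)) hu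
    (convex_closedConvexHull.affine_preimage (AffineMap.const ℝ ℝ b - AffineMap.id ℝ ℝ))
    (isClosed_closedConvexHull.preimage (continuous_sub_left b))
    fun _ hσ => subset_closedConvexHull (mem_image_of_mem _ hσ)

end IsWindowAverage

section Feedback

variable {f : ℝ → ℝ} {K : ℝ}

theorem apply_eq_self_of_sign_change (hf : Continuous f) (hK : 0 < K)
    (hbelow : ∀ y, 0 < y → y < K → y < f y) (habove : ∀ y, K < y → f y < y) : f K = K := by
  have hlim : Tendsto (fun y => f y - y) (𝓝 K) (𝓝 (f K - K)) :=
    ((hf.sub continuous_id).tendsto K)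
  have hle : f K - K ≤ 0 := le_of_tendsto (hlim.mono_left (nhdsWithin_le_nhds : 𝓝[>] K ≤ _))
    (eventually_nhdsWithin_of_forall fun y (hy : K < y) => (sub_neg.2 (habove y hy)).le)
  have hge : 0 ≤ f K - K := ge_of_tendsto (hlim.mono_left (nhdsWithin_le_nhds : 𝓝[<] K ≤ _))
    (by filter_upwards [Ioo_mem_nhdsLT hK] with y hy using (sub_pos.2 (hbelow y hy.1 hy.2)).le)
  linarith

theorem exists_pos_forall_le_sub (hf : Continuous f) (habove : ∀ y, K < y → f y < y) {η : ℝ}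
    (hη : 0 < η) (B : ℝ) : ∃ γ > 0, ∀ z ∈ Icc (K + η) B, f z ≤ z - γ := by
  obtain ⟨γ, hγ, h⟩ := (isCompact_Icc : IsCompact (Icc (K + η) B)).exists_forall_le'
    (f := fun z => z - f z) (by fun_prop) (a := 0)
    fun z hz => sub_pos.2 (habove z (by linarith [hz.1]))
  exact ⟨γ, hγ, fun z hz => by linarith [h z hz]⟩

theorem exists_pos_forall_add_le (hf : Continuous f) (hbelow : ∀ y, 0 < y → y < K → y < f y)
    {ℓ η : ℝ} (hℓ : 0 < ℓ) (hη : 0 < η) : ∃ γ > 0, ∀ z ∈ Icc ℓ (K - η), z + γ ≤ f z := by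
  obtain ⟨γ, hγ, h⟩ := (isCompact_Icc : IsCompact (Icc ℓ (K - η))).exists_forall_le'
    (f := fun z => f z - z) (by fun_prop) (a := 0)
    fun z hz => sub_pos.2 (hbelow z (by linarith [hz.1]) (by linarith [hz.2]))
  exact ⟨γ, hγ, fun z hz => by linarith [h z hz]⟩

theorem exists_forall_Icc_le_sub (hf : Continuous f) (habove : ∀ y, K < y → f y < y) (M : ℝ) :
    ∃ B ≥ M, ∃ γ > 0, ∀ z ∈ Icc 0 B, f z ≤ B - γ := by
  obtain ⟨C, hC⟩ := (isCompact_Icc : IsCompact (Icc 0 (K + 1))).exists_bound_of_continuousOn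
    hf.continuousOn
  set B := max M (max C (K + 1)) + 1
  obtain ⟨γ, hγ, hfγ⟩ := exists_pos_forall_le_sub hf habove one_pos B
  have hMB : M ≤ B := by simp only [B]; linarith [le_max_left M (max C (K + 1))]
  have hCB : max C (K + 1) + 1 ≤ B := by simp only [B]; linarith [le_max_right M (max C (K + 1))]
  refine ⟨B, hMB, min γ 1, lt_min hγ one_pos, fun z hz => ?_⟩
  rcases le_total z (K + 1) with hzK | hzK
  · have := (le_abs_self _).trans (hC z ⟨hz.1, hzK⟩)
    linarith [le_max_left C (K + 1), min_le_right γ 1]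
  · linarith [hfγ z ⟨hzK, hz.2⟩, min_le_left γ 1, hz.2]

theorem exists_pos_forall_min_le (hf : Continuous f) (hK : 0 < K) (hfK : f K = K)
    (hnonneg : ∀ y, 0 ≤ y → 0 ≤ f y) (hbelow : ∀ y, 0 < y → y < K → y < f y)
    (habove : ∀ y, K < y → 0 < f y) (B : ℝ) : ∃ ι > 0, ∀ z ∈ Icc 0 B, min z ι ≤ f z := by
  obtain ⟨ι, hι, h⟩ := (isCompact_Icc : IsCompact (Icc K B)).exists_forall_le' hf.continuousOn
    (a := 0)
    fun z hz => (eq_or_lt_of_le hz.1).elim (fun h => h ▸ hfK.symm ▸ hK) (habove z)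
  refine ⟨ι, hι, fun z hz => ?_⟩
  rcases lt_or_ge z K with hzK | hzK
  · rcases eq_or_lt_of_le hz.1 with rfl | hz0
    · exact (min_le_left _ _).trans (hnonneg 0 le_rfl)
    · exact (min_le_left _ _).trans (hbelow z hz0 hzK).le
  · exact (min_le_right _ _).trans (h z ⟨hzK, hz.2⟩)

end Feedback

namespace IsRelaxation

variable {r c : ℝ} {f g x Y : ℝ → ℝ}

theorem pos_of_window (hr : 0 ≤ r) (hx : Continuous x) (hrel : IsRelaxation r 0 x Y)
    (havg : IsWindowAverage c (f ∘ x) Y) (hf : ∀ y, 0 ≤ y → 0 ≤ f y) (hx0 : 0 < x 0)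
    (hinit : ∀ t ∈ Icc (-c) 0, 0 ≤ x t) : ∀ t, 0 ≤ t → 0 < x t := by
  refine hx.forall_pos_of_nonneg_imp_pos hx0 fun t ht hnn => ?_
  have hY : ∀ u ∈ Icc 0 t, 0 ≤ Y u := fun u hu =>
    havg.mem hu.1 (convex_Ici 0) isClosed_Ici fun σ hσ => hf _ <| by
      rcases le_total σ 0 with hσ0 | hσ0
      · exact hinit σ ⟨by linarith [hσ.1, hu.1], hσ0⟩
      · exact hnn σ ⟨hσ0, hσ.2.trans hu.2⟩
  have := hrel.sub_mul_exp_le hr hx le_rfl ht.le hY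
  simp only [sub_zero] at this
  exact (mul_pos hx0 (exp_pos _)).trans_le this

theorem exists_forall_le_of_window (hr : 0 < r) (hc : 0 ≤ c) (hx : Continuous x)
    (hrel : IsRelaxation r 0 x Y) (havg : IsWindowAverage c (f ∘ x) Y)
    (hnn : ∀ t, -c ≤ t → 0 ≤ x t) (hinv : ∀ M, ∃ B ≥ M, ∃ γ > 0, ∀ z ∈ Icc 0 B, f z ≤ B - γ) :
    ∃ B, ∀ t, -c ≤ t → x t ≤ B := by
  obtain ⟨M, hM⟩ := (isCompact_Icc : IsCompact (Icc (-c) 0)).exists_bound_of_continuousOn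
    hx.continuousOn
  have hxM : ∀ t ∈ Icc (-c) 0, x t ≤ M := fun t ht => (le_abs_self _).trans (hM t ht)
  obtain ⟨B, hB, γ, hγ, hfB⟩ := hinv (M + 1)
  have hlt : ∀ t, 0 ≤ t → 0 < B - x t := by
    refine (continuous_const.sub hx).forall_pos_of_nonneg_imp_pos (z := fun t => B - x t)
      (by linarith [hxM 0 ⟨by linarith, le_rfl⟩]) fun t ht hle => ?_
    have hY : ∀ u ∈ Icc 0 t, Y u ≤ B - γ := fun u hu =>
      havg.mem hu.1 (convex_Iic _) isClosed_Iic fun σ hσ =>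
        hfB _ ⟨hnn σ (by linarith [hσ.1, hu.1]), by
          rcases le_total σ 0 with hσ0 | hσ0
          · linarith [hxM σ ⟨by linarith [hσ.1, hu.1], hσ0⟩]
          · linarith [hle σ ⟨hσ0, hσ.2.trans hu.2⟩]⟩
    have := hrel.le_sub_mul_one_sub_exp hr.le hx le_rfl ht.le
      (by linarith [hle 0 ⟨le_rfl, ht.le⟩]) hY
    have hE : exp (-(r * (t - 0))) < 1 := exp_lt_one_iff.2 (by nlinarith)
    nlinarith
  refine ⟨B, fun t ht => ?_⟩
  rcases le_total t 0 with ht0 | ht0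
  · linarith [hxM t ⟨ht, ht0⟩]
  · linarith [hlt t ht0]

theorem exists_pos_forall_le_of_window (hr : 0 ≤ r) (hc : 0 ≤ c) (hx : Continuous x)
    (hrel : IsRelaxation r 0 x Y) (havg : IsWindowAverage c (f ∘ x) Y)
    (hpos : ∀ t, 0 ≤ t → 0 < x t) {B : ℝ} (hB : ∀ t, 0 ≤ t → x t ≤ B)
    (hfmin : ∃ ι > 0, ∀ z ∈ Icc 0 B, min z ι ≤ f z) : ∃ ℓ > 0, ∀ t, c ≤ t → ℓ ≤ x t := by
  obtain ⟨m, hm, hxm⟩ := (isCompact_Icc : IsCompact (Icc 0 c)).exists_forall_le'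
    hx.continuousOn (a := 0) fun t ht => hpos t ht.1
  obtain ⟨ι, hι, hfι⟩ := hfmin
  set ℓ := min (m / 2) ι
  have hℓm : ℓ < m := (min_le_left _ _).trans_lt (by linarith)
  have hlt : ∀ t, c ≤ t → 0 < x t - ℓ := by
    refine (hx.sub continuous_const).forall_pos_of_nonneg_imp_pos (z := fun t => x t - ℓ)
      (by linarith [hxm c ⟨hc, le_rfl⟩]) fun t ht hle => ?_
    have hY : ∀ u ∈ Icc c t, ℓ ≤ Y u := fun u hu =>
      havg.mem (hc.trans hu.1) (convex_Ici _) isClosed_Ici fun σ hσ => by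
        have hσ0 : 0 ≤ σ := by linarith [hσ.1, hu.1]
        have hℓσ : ℓ ≤ x σ := by
          rcases le_total σ c with hσc | hσc
          · linarith [hxm σ ⟨hσ0, hσc⟩]
          · linarith [hle σ ⟨hσc, hσ.2.trans hu.2⟩]
        exact (le_min hℓσ (min_le_right _ _)).trans (hfι _ ⟨(hpos σ hσ0).le, hB σ hσ0⟩)
    have := hrel.sub_mul_exp_le hr hx hc ht.le hY
    nlinarith [exp_pos (-(r * (t - c))), hxm c ⟨hc, le_rfl⟩]
  exact ⟨ℓ, lt_min (by linarith) hι, fun t ht => by linarith [hlt t ht]⟩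

theorem lipschitz_of_window (hr : 0 ≤ r) (hc : 0 ≤ c) (hrel : IsRelaxation r 0 x Y)
    (havg : IsWindowAverage c g Y) {T K L V : ℝ} (hT : 0 ≤ T)
    (hV : ∀ σ, T ≤ σ → |x σ - K| ≤ V ∧ |g σ - K| ≤ L * V) :
    ∀ s t, T + c ≤ s → s ≤ t → |x t - x s| ≤ r * ((L + 1) * V) * (t - s) := by
  refine fun s t hs hst => hrel.abs_sub_le_mul hr (by linarith) hst fun u hu => ?_
  have hYu : Y u ∈ Icc (K - L * V) (K + L * V) :=
    havg.mem (by linarith [hu.1]) (convex_Icc _ _) isClosed_Icc fun σ hσ => by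
      have := abs_le.1 (hV σ (by linarith [hσ.1, hu.1])).2
      exact ⟨by linarith, by linarith⟩
  have := abs_le.1 (hV u (by linarith [hu.1])).1
  exact abs_le.2 ⟨by linarith [hYu.1], by linarith [hYu.2]⟩

theorem le_of_window_restoring (hr : 0 ≤ r) (hc : 0 ≤ c) (hx : Continuous x)
    (hrel : IsRelaxation r 0 x Y) (havg : IsWindowAverage c g Y) {T K V R η γ δ t : ℝ}
    (hT : 0 ≤ T) (hR : 0 ≤ R) (hδ : 0 ≤ δ) (hV : ∀ σ, T ≤ σ → x σ ≤ K + V)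
    (hlip : ∀ s t, T + c ≤ s → s ≤ t → |x t - x s| ≤ R * (t - s))
    (hrest : ∀ σ, T ≤ σ → K + η ≤ x σ → g σ ≤ x σ - γ)
    (ht : T + 2 * c + δ ≤ t) (hxt : K + η + R * (δ + c) ≤ x t) :
    x t ≤ K + V - γ * (1 - exp (-(r * δ))) := by
  have hY : ∀ u ∈ Icc (t - δ) t, Y u ≤ K + V - γ := fun u hu =>
    havg.mem (by linarith [hu.1]) (convex_Iic _) isClosed_Iic fun σ hσ => by
      have hσT : T + c ≤ σ := by linarith [hσ.1, hu.1]
      have hσx : K + η ≤ x σ := by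
        have := (abs_le.1 (hlip σ t hσT (hσ.2.trans hu.2))).2
        have : R * (t - σ) ≤ R * (δ + c) :=
          mul_le_mul_of_nonneg_left (by linarith [hσ.1, hu.1]) hR
        linarith
      show g σ ≤ K + V - γ
      linarith [hrest σ (by linarith) hσx, hV σ (by linarith)]
  have := hrel.le_sub_mul_one_sub_exp hr hx (by linarith : 0 ≤ t - δ) (by linarith)
    (hV _ (by linarith)) hY
  rwa [sub_sub_cancel] at this

theorem exists_eventually_le_sub {L K W : ℝ} (hr : 0 < r) (hc : 0 ≤ c) (hL : 0 ≤ L)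
    (hθ : r * c * (L + 1) < 1) (hx : Continuous x) (hrel : IsRelaxation r 0 x Y)
    (havg : IsWindowAverage c g Y) (hW : 0 < W)
    (hxW : ∀ ε > 0, ∀ᶠ t in atTop, |x t - K| ≤ W + ε)
    (hg : ∀ᶠ σ in atTop, |g σ - K| ≤ L * |x σ - K|)
    (hrest : ∀ η > 0, ∃ γ > 0, ∀ᶠ σ in atTop, K + η ≤ x σ → g σ ≤ x σ - γ) :
    ∃ ε > 0, ∀ᶠ t in atTop, x t ≤ K + W - ε := by
  -- `η` is the margin above `K` kept on the delay windows, `δ` a time over which `x` moves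
  -- by at most `η`, and `κ` the resulting pull towards `K` over time `δ`
  set θ := r * c * (L + 1)
  set η := (1 - θ) * W / 4
  have hη : 0 < η := div_pos (mul_pos (by linarith) hW) four_pos
  obtain ⟨γ, hγ, hγ_ev⟩ := hrest η hη
  have hR₁ : 0 < r * (L + 1) * (W + 1) := by positivity
  set δ := η / (r * (L + 1) * (W + 1))
  have hδ : 0 < δ := div_pos hη hR₁
  set κ := γ * (1 - exp (-(r * δ)))
  have hκ : 0 < κ := mul_pos hγ (sub_pos.2 (exp_lt_one_iff.2 (by nlinarith)))
  set ε := min 1 (min η (κ / 3))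
  have hε : 0 < ε := lt_min one_pos (lt_min hη (by linarith))
  have hε1 : ε ≤ 1 := min_le_left _ _
  have hεη : ε ≤ η := (min_le_right _ _).trans (min_le_left _ _)
  have hεκ : ε ≤ κ / 3 := (min_le_right _ _).trans (min_le_right _ _)
  obtain ⟨T, hT⟩ :=
    ((hxW ε hε).and (hg.and (hγ_ev.and (eventually_ge_atTop 0)))).exists_forall_of_atTop
  have hT0 : 0 ≤ T := (hT T le_rfl).2.2.2
  have hlip := hrel.lipschitz_of_window hr.le hc havg hT0 (V := W + ε) fun σ hσ =>
    ⟨(hT σ hσ).1, (hT σ hσ).2.1.trans (mul_le_mul_of_nonneg_left (hT σ hσ).1 hL)⟩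
  have hRδ : r * ((L + 1) * (W + ε)) * δ ≤ η := by
    rw [show r * ((L + 1) * (W + ε)) * δ = η * (r * (L + 1) * (W + ε) / (r * (L + 1) * (W + 1)))
      by simp only [δ]; ring]
    exact mul_le_of_le_one_right hη.le ((div_le_one hR₁).2 (by gcongr))
  have hRc : r * ((L + 1) * (W + ε)) * c ≤ θ * W + ε := by
    nlinarith [mul_le_mul_of_nonneg_right hθ.le hε.le]
  refine ⟨ε, hε, ?_⟩
  filter_upwards [eventually_ge_atTop (T + 2 * c + δ)] with t ht
  by_contra! hlt
  have h4η : 4 * η = W - θ * W := by simp only [η]; ring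
  have := hrel.le_of_window_restoring hr.le hc hx havg hT0 (V := W + ε) (η := η) (γ := γ)
    (by positivity) hδ.le (fun σ hσ => by linarith [(abs_le.1 (hT σ hσ).1).2]) hlip
    (fun σ hσ => (hT σ hσ).2.2.1) ht (by rw [mul_add]; linarith)
  have hκdef : κ = γ * (1 - exp (-(r * δ))) := rfl
  linarith

theorem tendsto_of_window {L K : ℝ} (hr : 0 < r) (hc : 0 ≤ c) (hL : 0 ≤ L) (hK : 0 < K)
    (hθ : r * c * (L + 1) < 1) (hf_cont : Continuous f)
    (hf_nonneg : ∀ y, 0 ≤ y → 0 ≤ f y) (hf_lip : ∀ u v, 0 ≤ u → 0 ≤ v → |f u - f v| ≤ L * |u - v|)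
    (hf_below : ∀ y, 0 < y → y < K → y < f y) (hf_above : ∀ y, K < y → 0 < f y ∧ f y < y)
    (hx : Continuous x) (hrel : IsRelaxation r 0 x Y) (havg : IsWindowAverage c (f ∘ x) Y)
    (hx0 : 0 < x 0) (hinit : ∀ t ∈ Icc (-c) 0, 0 ≤ x t) : Tendsto x atTop (𝓝 K) := by
  have hfK := apply_eq_self_of_sign_change hf_cont hK hf_below fun y hy => (hf_above y hy).2
  have hpos := hrel.pos_of_window hr.le hx havg hf_nonneg hx0 hinit
  have hnn : ∀ t, -c ≤ t → 0 ≤ x t := fun t ht =>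
    (le_total t 0).elim (fun h => hinit t ⟨ht, h⟩) fun h => (hpos t h).le
  obtain ⟨B, hB⟩ := hrel.exists_forall_le_of_window hr hc hx havg hnn
    (exists_forall_Icc_le_sub hf_cont fun y hy => (hf_above y hy).2)
  obtain ⟨ℓ, hℓ, hxℓ⟩ := hrel.exists_pos_forall_le_of_window hr.le hc hx havg hpos
    (fun t ht => hB t (by linarith)) (exists_pos_forall_min_le hf_cont hK hfK hf_nonneg hf_below
      (fun y hy => (hf_above y hy).1) B)
  have hlipK : ∀ᶠ σ in atTop, |f (x σ) - K| ≤ L * |x σ - K| :=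
    (eventually_ge_atTop 0).mono fun σ hσ => by
      simpa only [hfK] using hf_lip _ K (hpos σ hσ).le hK.le
  have hrefl : ∀ a, |(2 * K - a) - K| = |a - K| := fun a => by
    rw [← abs_neg]; ring_nf
  refine tendsto_of_forall_eventually_abs_sub_le (B := B + K) ?_ fun W hW hxW => ?_
  · filter_upwards [eventually_ge_atTop 0] with t ht
    have := hB t (by linarith)
    exact abs_le.2 ⟨by linarith [hpos t ht], by linarith⟩
  obtain ⟨ε₁, hε₁, h₁⟩ := hrel.exists_eventually_le_sub hr hc hL hθ hx havg hW hxW hlipK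
    fun η hη => by
      obtain ⟨γ, hγ, hfγ⟩ := exists_pos_forall_le_sub hf_cont (fun y hy => (hf_above y hy).2) hη B
      exact ⟨γ, hγ, (eventually_ge_atTop 0).mono fun σ hσ hση =>
        hfγ _ ⟨hση, hB σ (by linarith)⟩⟩
  obtain ⟨ε₂, hε₂, h₂⟩ := (hrel.const_sub (2 * K)).exists_eventually_le_sub (K := K)
    (g := fun σ => 2 * K - f (x σ)) hr hc hL hθ (by fun_prop) (havg.const_sub (2 * K)) hW
    (by simpa only [hrefl] using hxW) (hlipK.mono fun σ h => by simpa only [hrefl] using h)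
    fun η hη => by
      obtain ⟨γ, hγ, hfγ⟩ := exists_pos_forall_add_le hf_cont hf_below hℓ hη
      exact ⟨γ, hγ, (eventually_ge_atTop c).mono fun σ hσ hση => by
        linarith [hfγ (x σ) ⟨hxℓ σ hσ, by linarith⟩]⟩
  refine ⟨min ε₁ ε₂, lt_min hε₁ hε₂, ?_⟩
  filter_upwards [h₁, h₂] with t h1 h2
  exact abs_le.2 ⟨by linarith [min_le_right ε₁ ε₂], by linarith [min_le_left ε₁ ε₂]⟩

end IsRelaxation

theorem isRelaxation_of_eq_add_integral {r : ℝ} {x Y : ℝ → ℝ} (hx : Continuous x)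
    (hY : ∀ s t, 0 ≤ s → s ≤ t → IntervalIntegrable Y volume s t)
    (hsol : ∀ t, 0 ≤ t → x t = x 0 + ∫ u in (0 : ℝ)..t, r * (Y u - x u)) :
    IsRelaxation r 0 x Y := by
  have hI : ∀ a b, 0 ≤ a → a ≤ b → IntervalIntegrable (fun u => r * (Y u - x u)) volume a b :=
    fun a b ha hab => ((hY a b ha hab).sub (hx.intervalIntegrable a b)).const_mul r
  refine fun s t hs hst => ⟨hY s t hs hst, ?_⟩
  rw [hsol t (hs.trans hst), hsol s hs,
    ← intervalIntegral.integral_add_adjacent_intervals (hI 0 s le_rfl hs) (hI s t hs hst)]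
  ring

section DistributedDelay

variable {c : ℝ} {μ : ℝ → Measure ℝ} {h g : ℝ → ℝ}

theorem isWindowAverage_integral (hg : Continuous g)
    (hμ_prob : ∀ t, 0 ≤ t → IsProbabilityMeasure (μ t))
    (hμ_supp : ∀ t, 0 ≤ t → μ t (Icc (h t) t)ᶜ = 0) (hdelay : ∀ t, 0 ≤ t → t - h t ≤ c) :
    IsWindowAverage c g (fun u => ∫ s, g s ∂μ u) := by
  intro u hu
  have hae : ∀ᵐ s ∂μ u, s ∈ Icc (h u) u := mem_ae_iff.2 (hμ_supp u hu)
  obtain ⟨C, hC⟩ := (isCompact_Icc : IsCompact (Icc (h u) u)).exists_bound_of_continuousOn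
    hg.continuousOn
  have := hμ_prob u hu
  exact Convex.integral_mem convex_closedConvexHull isClosed_closedConvexHull
    (hae.mono fun s hs => subset_closedConvexHull
      (mem_image_of_mem g ⟨by linarith [hdelay u hu, hs.1], hs.2⟩))
    (Integrable.of_bound hg.aestronglyMeasurable C (hae.mono hC))

theorem intervalIntegrable_integral (hg : Continuous g)
    (hμ_meas : ∀ g : ℝ → ℝ, Measurable g → (∃ C : ℝ, ∀ y : ℝ, |g y| ≤ C) →
      Measurable (fun t => ∫ s, g s ∂(μ t)))
    (hμ_prob : ∀ t, 0 ≤ t → IsProbabilityMeasure (μ t))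
    (hμ_supp : ∀ t, 0 ≤ t → μ t (Icc (h t) t)ᶜ = 0) (hdelay : ∀ t, 0 ≤ t → t - h t ≤ c)
    {s t : ℝ} (hs : 0 ≤ s) (hst : s ≤ t) :
    IntervalIntegrable (fun u => ∫ σ, g σ ∂μ u) volume s t := by
  -- `g` only matters on `[s - c, t]`; cutting it off there makes it bounded
  set G := (Icc (s - c) t).indicator g
  obtain ⟨C, hC⟩ := (isCompact_Icc : IsCompact (Icc (s - c) t)).exists_bound_of_continuousOn
    hg.continuousOn
  have hGC : ∀ y, |G y| ≤ max C 0 := fun y => by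
    by_cases hy : y ∈ Icc (s - c) t
    · simpa [G, hy] using (hC y hy).trans (le_max_left C 0)
    · simp [G, hy]
  have hGm := hμ_meas G (hg.measurable.indicator measurableSet_Icc) ⟨_, hGC⟩
  have heq : EqOn (fun u => ∫ σ, G σ ∂μ u) (fun u => ∫ σ, g σ ∂μ u) (uIoc s t) := fun u hu => by
    rw [uIoc_of_le hst] at hu
    have hu0 : 0 ≤ u := hs.trans hu.1.le
    have hae : ∀ᵐ σ ∂μ u, σ ∈ Icc (h u) u := mem_ae_iff.2 (hμ_supp u hu0)
    exact integral_congr_ae (hae.mono fun σ hσ =>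
      indicator_of_mem (s := Icc (s - c) t)
        ⟨by linarith [hdelay u hu0, hσ.1, hu.1], hσ.2.trans hu.2⟩ g)
  refine (intervalIntegrable_congr heq).1 <|
    (intervalIntegrable_iff_integrableOn_Ioc_of_le hst).2 <|
    IntegrableOn.of_bound measure_Ioc_lt_top hGm.aestronglyMeasurable (max C 0) ?_
  filter_upwards [ae_restrict_mem measurableSet_Ioc] with u hu
  have := hμ_prob u (hs.trans hu.1.le)
  simpa using norm_integral_le_of_norm_le_const (μ := μ u) (f := G)
    (Eventually.of_forall fun σ => (hGC σ : ‖G σ‖ ≤ max C 0))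

end DistributedDelay

theorem distributed_delay_small_delay_constant_r_general
    (f : ℝ → ℝ) (L K : ℝ) (hL : 0 ≤ L) (hK : 0 < K)
    (h : ℝ → ℝ) (r : ℝ) (hr : 0 < r) (μ : ℝ → Measure ℝ) (φ : ℝ → ℝ)
    (hf_cont : Continuous f)
    (hf_nonneg : ∀ y : ℝ, 0 ≤ y → 0 ≤ f y)
    (hf_lip : ∀ u v : ℝ, 0 ≤ u → 0 ≤ v → |f u - f v| ≤ L * |u - v|)
    (hf_below : ∀ y : ℝ, 0 < y → y < K → y < f y)
    (hf_above : ∀ y : ℝ, K < y → 0 < f y ∧ f y < y)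
    (hh_le : ∀ t : ℝ, 0 ≤ t → h t ≤ t)
    (hμ_prob : ∀ t : ℝ, 0 ≤ t → IsProbabilityMeasure (μ t))
    (hμ_supp : ∀ t : ℝ, 0 ≤ t → μ t (Icc (h t) t)ᶜ = 0)
    (hμ_meas : ∀ g : ℝ → ℝ, Measurable g → (∃ C : ℝ, ∀ y : ℝ, |g y| ≤ C) →
      Measurable (fun t => ∫ s, g s ∂(μ t)))
    (hφ_nonneg : ∀ t : ℝ, t ≤ 0 → 0 ≤ φ t)
    (hφ_pos : 0 < φ 0)
    (hdelay : ∃ c : ℝ, (∀ t : ℝ, 0 ≤ t → t - h t ≤ c) ∧ c < 1 / (r * (L + 1)))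
    (x : ℝ → ℝ)
    (hx_cont : Continuous x)
    (hx_init : ∀ t : ℝ, t ≤ 0 → x t = φ t)
    (hx_sol : ∀ t : ℝ, 0 ≤ t →
      x t = φ 0 + ∫ u in (0:ℝ)..t, r * ((∫ s, f (x s) ∂(μ u)) - x u)) :
    Tendsto x atTop (nhds K) := by
  obtain ⟨c, hc_delay, hc_small⟩ := hdelay
  have hc : 0 ≤ c := by linarith [hc_delay 0 le_rfl, hh_le 0 le_rfl]
  have hθ : r * c * (L + 1) < 1 := by
    rw [lt_div_iff₀ (by positivity)] at hc_small; linarith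
  have hrel : IsRelaxation r 0 x fun u => ∫ s, f (x s) ∂μ u :=
    isRelaxation_of_eq_add_integral hx_cont
      (fun _ _ => intervalIntegrable_integral (hf_cont.comp hx_cont) hμ_meas hμ_prob hμ_supp
        hc_delay)
      (hx_init 0 le_rfl ▸ hx_sol)
  exact hrel.tendsto_of_window hr hc hL hK hθ hf_cont hf_nonneg hf_lip hf_below hf_above hx_cont
    (isWindowAverage_integral (hf_cont.comp hx_cont) hμ_prob hμ_supp hc_delay)
    (hx_init 0 le_rfl ▸ hφ_pos) fun t ht => hx_init t ht.2 ▸ hφ_nonneg t ht.2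

theorem distributed_delay_small_delay_constant_r
    (f : ℝ → ℝ) (L K : ℝ) (hL : 0 ≤ L) (hK : 0 < K)
    (h : ℝ → ℝ) (r : ℝ) (hr : 0 < r) (μ : ℝ → Measure ℝ) (φ : ℝ → ℝ)
    (hf_cont : Continuous f)
    (hf_nonneg : ∀ y : ℝ, 0 ≤ y → 0 ≤ f y)
    (hf_lip : ∀ u v : ℝ, 0 ≤ u → 0 ≤ v → |f u - f v| ≤ L * |u - v|)
    (hf_zero : f 0 = 0)
    (hf_below : ∀ y : ℝ, 0 < y → y < K → y < f y)
    (hf_above : ∀ y : ℝ, K < y → 0 < f y ∧ f y < y)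
    (hh_meas : Measurable h)
    (hh_le : ∀ t : ℝ, 0 ≤ t → h t ≤ t)
    (hh_tend : Tendsto h atTop atTop)
    (hμ_prob : ∀ t : ℝ, 0 ≤ t → IsProbabilityMeasure (μ t))
    (hμ_supp : ∀ t : ℝ, 0 ≤ t → μ t (Icc (h t) t)ᶜ = 0)
    (hμ_meas : ∀ g : ℝ → ℝ, Measurable g → (∃ C : ℝ, ∀ y : ℝ, |g y| ≤ C) →
      Measurable (fun t => ∫ s, g s ∂(μ t)))
    (hφ_cont : ContinuousOn φ (Iic (0 : ℝ)))
    (hφ_bdd : ∃ C : ℝ, ∀ t : ℝ, t ≤ 0 → |φ t| ≤ C)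
    (hφ_nonneg : ∀ t : ℝ, t ≤ 0 → 0 ≤ φ t)
    (hφ_pos : 0 < φ 0)
    (hdelay : ∃ c : ℝ, (∀ t : ℝ, 0 ≤ t → t - h t ≤ c) ∧ c < 1 / (r * (L + 1)))
    (x : ℝ → ℝ)
    (hx_cont : Continuous x)
    (hx_init : ∀ t : ℝ, t ≤ 0 → x t = φ t)
    (hx_sol : ∀ t : ℝ, 0 ≤ t →
      x t = φ 0 + ∫ u in (0:ℝ)..t, r * ((∫ s, f (x s) ∂(μ u)) - x u)) :
    Tendsto x atTop (nhds K) :=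
  distributed_delay_small_delay_constant_r_general f L K hL hK h r hr μ φ hf_cont hf_nonneg hf_lip
    hf_below hf_above hh_le hμ_prob hμ_supp hμ_meas hφ_nonneg hφ_pos hdelay x hx_cont hx_init hx_sol
end

section
/- Under hypotheses (a1)–(a5), let M = max_{x ∈ [0,K]} f(x) and m = min_{x ∈ [K,M]} f(x), and suppose M > K. Let x_max be the greatest point of [0,K] at which f attains the value M and x_min the least point of [K,M] at which f attains the value m, and assume m = f(x_min) < x_max < K. Then [m, M] is an attracting interval: every solution x of the initial value problem for the distributed-delay equation satisfies m ≤ liminf_{t→∞} x(t) and limsup_{t→∞} x(t) ≤ M. -/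
open MeasureTheory Filter Set

/-!
With `F u = ∫ f (x s) ∂μ_u`, the equation says `x' = r (F - x)`: `x` relaxes towards the delayed
average `F` at a rate whose integral diverges. Hence `F ≤ d` eventually forces `limsup x ≤ d`,
and symmetrically for lower bounds. As the windows `[h u, u]` carrying `μ_u` escape to infinity,
`S = limsup x` is bounded by the maximum of `f` on `[0, S + ε]` for every `ε > 0`, so by
compactness `S ≤ f y` for some `y ∈ [0, S]`; since `f y < y` beyond `K`, this gives `S ≤ M`.
Likewise `ℓ = liminf x ≥ f y` for some `y ∈ [ℓ, S]`, and `f y > y` on `(0, K)` forces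
`y ∈ [K, M]`, whence `ℓ ≥ m`. The a priori facts this needs (positivity, boundedness and
`liminf x > 0`) all come from one principle: a bounded rate cannot carry `x` across a level
in finite time.
-/

theorem IsClosed.inter_Icc_nonempty_of_forall_pos {A : Set ℝ} {a b : ℝ} (hA : IsClosed A)
    (hab : a ≤ b) (h : ∀ ε > 0, (A ∩ Icc (a - ε) (b + ε)).Nonempty) :
    (A ∩ Icc a b).Nonempty := by
  by_contra hempty
  obtain ⟨δ, hδ, hsub⟩ := isCompact_Icc.exists_cthickening_subset_open hA.isOpen_compl
    fun y hy hyA => hempty ⟨y, hyA, hy⟩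
  obtain ⟨y, hyA, hy⟩ := h δ hδ
  have hproj : y - δ ≤ max a (min y b) ∧ max a (min y b) ≤ y + δ :=
    ⟨le_max_of_le_right (le_min (by linarith) (by linarith [hy.2])),
      max_le (by linarith [hy.1]) ((min_le_left _ _).trans (by linarith))⟩
  refine hsub (Metric.mem_cthickening_of_dist_le y (max a (min y b)) δ _
    ⟨le_max_left _ _, max_le hab (min_le_right _ _)⟩ ?_) hyA
  rw [Real.dist_eq, abs_sub_le_iff]
  constructor <;> linarith

theorem exists_first_eq_of_lt_of_le {x : ℝ → ℝ} {a t c : ℝ} (hx : Continuous x) (hat : a ≤ t)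
    (ha : x a < c) (ht : c ≤ x t) : ∃ τ ∈ Ioc a t, x τ = c ∧ ∀ s ∈ Ico a τ, x s < c := by
  set S := Icc a t ∩ {s | c ≤ x s}
  have hbdd : BddBelow S := bddBelow_Icc.mono inter_subset_left
  obtain ⟨⟨hτa, hτt⟩, hτc⟩ : sInf S ∈ S :=
    (isClosed_Icc.inter (isClosed_le continuous_const hx)).csInf_mem ⟨t, ⟨hat, le_rfl⟩, ht⟩ hbdd
  have hbefore : ∀ s ∈ Ico a (sInf S), x s < c := fun s hs =>
    not_le.1 fun hcs => (csInf_le hbdd ⟨⟨hs.1, hs.2.le.trans hτt⟩, hcs⟩).not_gt hs.2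
  have hτa' : a < sInf S := hτa.lt_of_ne fun h => by rw [← h] at hτc; exact hτc.not_gt ha
  refine ⟨sInf S, ⟨hτa', hτt⟩, le_antisymm (not_lt.1 fun hlt => ?_) hτc, hbefore⟩
  obtain ⟨s, hs, hsc⟩ := intermediate_value_Ico hτa hx.continuousOn ⟨ha.le, hlt⟩
  exact (hbefore s hs).ne hsc

theorem exists_last_le {x : ℝ → ℝ} {a t l : ℝ} (hx : Continuous x) (hat : a ≤ t) (ha : x a ≤ l) :
    ∃ τ ∈ Icc a t, x τ ≤ l ∧ ∀ u ∈ Ioc τ t, l < x u := by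
  set S := Icc a t ∩ {s | x s ≤ l}
  have hbdd : BddAbove S := bddAbove_Icc.mono inter_subset_left
  obtain ⟨hτ, hτl⟩ : sSup S ∈ S :=
    (isClosed_Icc.inter (isClosed_le hx continuous_const)).csSup_mem ⟨a, ⟨le_rfl, hat⟩, ha⟩ hbdd
  exact ⟨sSup S, hτ, hτl, fun u hu => not_le.1 fun hul =>
    (le_csSup hbdd ⟨⟨hτ.1.trans hu.1.le, hu.2⟩, hul⟩).not_gt hu.1⟩

theorem integral_le_of_forall_mem_le {X : Type*} [MeasurableSpace X] [TopologicalSpace X]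
    [OpensMeasurableSpace X] [T2Space X] {ν : Measure X} [IsProbabilityMeasure ν] {S : Set X}
    {φ : X → ℝ} {c : ℝ} (hS : IsCompact S) (hνS : ν Sᶜ = 0) (hφ : Continuous φ)
    (h : ∀ s ∈ S, φ s ≤ c) : ∫ s, φ s ∂ν ≤ c := by
  have hae : ∀ᵐ s ∂ν, s ∈ S := ae_iff.2 hνS
  have hint : Integrable φ ν := by
    rw [← Measure.restrict_eq_self_of_ae_mem hae]
    exact hφ.continuousOn.integrableOn_compact hS
  calc ∫ s, φ s ∂ν ≤ ∫ _, c ∂ν := integral_mono_ae hint (integrable_const c) (hae.mono h)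
    _ = c := by simp

theorem le_integral_of_forall_mem_le {X : Type*} [MeasurableSpace X] [TopologicalSpace X]
    [OpensMeasurableSpace X] [T2Space X] {ν : Measure X} [IsProbabilityMeasure ν] {S : Set X}
    {φ : X → ℝ} {c : ℝ} (hS : IsCompact S) (hνS : ν Sᶜ = 0) (hφ : Continuous φ)
    (h : ∀ s ∈ S, c ≤ φ s) : c ≤ ∫ s, φ s ∂ν := by
  have := integral_le_of_forall_mem_le hS hνS hφ.neg fun s hs => neg_le_neg (h s hs)
  rw [Pi.neg_def, integral_neg] at this
  linarith

theorem tendsto_intervalIntegral_atTop_of_not_integrableOn {r : ℝ → ℝ} {a : ℝ}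
    (hr0 : ∀ u, 0 ≤ r u) (hr : ∀ s t, IntervalIntegrable r volume s t)
    (hdiv : ¬ IntegrableOn r (Ioi a)) (T : ℝ) :
    Tendsto (fun t => ∫ u in T..t, r u) atTop atTop := by
  refine tendsto_atTop_atTop_of_monotone' (fun s t hst => ?_) ?_
  · rw [← sub_nonneg, intervalIntegral.integral_interval_sub_left (hr T t) (hr T s)]
    exact intervalIntegral.integral_nonneg hst fun u _ => hr0 u
  · rintro ⟨I, hI⟩
    refine hdiv (integrableOn_Ioi_of_intervalIntegral_norm_bounded ((∫ u in a..T, r u) + I) a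
      (fun t => (hr a t).1) tendsto_id (Eventually.of_forall fun t => ?_))
    simp only [Real.norm_of_nonneg (hr0 _)]
    rw [← intervalIntegral.integral_add_adjacent_intervals (hr a T) (hr T t)]
    exact add_le_add_right (hI ⟨t, rfl⟩) _

theorem Filter.eventually_forall_mem_Icc_of_tendsto {h : ℝ → ℝ} (hh : Tendsto h atTop atTop)
    {p : ℝ → Prop} (hp : ∀ᶠ s in atTop, p s) : ∀ᶠ u in atTop, ∀ s ∈ Icc (h u) u, p s := by
  obtain ⟨T, hT⟩ := eventually_atTop.1 hp
  filter_upwards [hh.eventually_ge_atTop T] with u hu s hs using hT s (hu.trans hs.1)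

structure IsPrimitiveFrom (x g : ℝ → ℝ) (a : ℝ) : Prop where
  integrableOn_Ioc : ∀ b, IntegrableOn g (Ioc a b)
  eq_add_integral : ∀ s t, a ≤ s → s ≤ t → x t = x s + ∫ u in s..t, g u

namespace IsPrimitiveFrom

variable {x g : ℝ → ℝ} {a : ℝ}

theorem intervalIntegrable (hx : IsPrimitiveFrom x g a) {s t : ℝ} (hs : a ≤ s) (hst : s ≤ t) :
    IntervalIntegrable g volume s t :=
  (intervalIntegrable_iff_integrableOn_Ioc_of_le hst).2
    ((hx.integrableOn_Ioc t).mono_set (Ioc_subset_Ioc_left hs))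

theorem of_eq_add_integral (hg : ∀ b, IntegrableOn g (Ioc a b))
    (hx : ∀ t, a ≤ t → x t = x a + ∫ u in a..t, g u) : IsPrimitiveFrom x g a where
  integrableOn_Ioc := hg
  eq_add_integral s t hs hst := by
    have hii : ∀ b, a ≤ b → IntervalIntegrable g volume a b := fun b hb =>
      (intervalIntegrable_iff_integrableOn_Ioc_of_le hb).2 (hg b)
    rw [hx t (hs.trans hst), hx s hs, ← intervalIntegral.integral_interval_sub_left
      (hii t (hs.trans hst)) (hii s hs)]
    ring

theorem mono (hx : IsPrimitiveFrom x g a) {b : ℝ} (hab : a ≤ b) : IsPrimitiveFrom x g b where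
  integrableOn_Ioc c := (hx.integrableOn_Ioc c).mono_set (Ioc_subset_Ioc_left hab)
  eq_add_integral s t hs := hx.eq_add_integral s t (hab.trans hs)

theorem neg (hx : IsPrimitiveFrom x g a) : IsPrimitiveFrom (fun t => -x t) (fun u => -g u) a where
  integrableOn_Ioc b := (hx.integrableOn_Ioc b).neg
  eq_add_integral s t hs hst := by
    rw [hx.eq_add_integral s t hs hst, intervalIntegral.integral_neg]
    ring

theorem le_add_integral (hx : IsPrimitiveFrom x g a) {k : ℝ → ℝ} {s t : ℝ} (hs : a ≤ s)
    (hst : s ≤ t) (hk : IntegrableOn k (Ioc s t))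
    (hgk : ∀ᵐ u ∂volume.restrict (Ioc s t), g u ≤ k u) : x t ≤ x s + ∫ u in s..t, k u := by
  rw [hx.eq_add_integral s t hs hst, intervalIntegral.integral_of_le hst,
    intervalIntegral.integral_of_le hst]
  gcongr 1
  exact setIntegral_mono_ae_restrict ((hx.intervalIntegrable hs hst).1) hk hgk

theorem le_add_mul (hx : IsPrimitiveFrom x g a) {s t K : ℝ} (hs : a ≤ s) (hst : s ≤ t)
    (hgK : ∀ᵐ u ∂volume.restrict (Ioc s t), g u ≤ K) : x t ≤ x s + K * (t - s) := by
  have := hx.le_add_integral hs hst (integrableOn_const measure_Ioc_lt_top.ne) hgK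
  rwa [intervalIntegral.integral_const, smul_eq_mul, mul_comm] at this

/-- In the last `1 / (2C)` time units before `b`, the rate bound lets `x` climb at most half of
its remaining distance to `c`. -/
theorem lt_of_forall_lt_of_rate_le (hx : IsPrimitiveFrom x g a) (hxc : Continuous x)
    {b c C : ℝ} (hC : 0 < C) (hab : a < b) (hlt : ∀ s ∈ Ico a b, x s < c)
    (hg : ∀ᵐ u ∂volume.restrict (Ioc a b), g u ≤ C * (c - x u)) : x b < c := by
  set a' := max a (b - 1 / (2 * C))
  have ha' : a ≤ a' := le_max_left _ _
  have hb : b - a' ≤ 1 / (2 * C) := by linarith [le_max_right a (b - 1 / (2 * C))]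
  have ha'b : a' < b := max_lt hab (by linarith [one_div_pos.2 (mul_pos two_pos hC)])
  obtain ⟨s₀, hs₀, hmax⟩ := isCompact_Icc.exists_isMaxOn (nonempty_Icc.2 ha') hxc.continuousOn
  have hlc : x s₀ < c := hlt s₀ ⟨hs₀.1, hs₀.2.trans_lt ha'b⟩
  obtain ⟨τ, hτ, hτl, habove⟩ := exists_last_le hxc ha'b.le (hmax ⟨ha', le_rfl⟩)
  have hrate : ∀ᵐ u ∂volume.restrict (Ioc τ b), g u ≤ C * (c - x s₀) := by
    filter_upwards [ae_restrict_of_ae_restrict_of_subset (Ioc_subset_Ioc_left (ha'.trans hτ.1)) hg,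
      ae_restrict_mem measurableSet_Ioc] with u hu hmem
    exact hu.trans (mul_le_mul_of_nonneg_left (by linarith [habove u hmem]) hC.le)
  have hstep := hx.le_add_mul (ha'.trans hτ.1) hτ.2 hrate
  have hCτ : C * (b - τ) ≤ 1 / 2 := by
    calc C * (b - τ) ≤ C * (1 / (2 * C)) := by gcongr; linarith [hτ.1]
      _ = 1 / 2 := by field_simp
  nlinarith

theorem forall_lt_of_rate_le (hx : IsPrimitiveFrom x g a) (hxc : Continuous x) {c C : ℝ}
    (hC : 0 < C) (ha : x a < c)
    (hg : ∀ b, a ≤ b → (∀ s ∈ Icc a b, x s ≤ c) →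
      ∀ᵐ u ∂volume.restrict (Ioc a b), g u ≤ C * (c - x u)) :
    ∀ t, a ≤ t → x t < c := by
  intro t hat
  by_contra! hct
  obtain ⟨τ, hτ, hτc, hbefore⟩ := exists_first_eq_of_lt_of_le hxc hat ha hct
  have hle : ∀ s ∈ Icc a τ, x s ≤ c := fun s hs =>
    hs.2.lt_or_eq.elim (fun h => (hbefore s ⟨hs.1, h⟩).le) fun h => h ▸ hτc.le
  exact (hx.lt_of_forall_lt_of_rate_le hxc hC hτ.1 hbefore (hg τ hτ.1.le hle)).ne hτc

theorem eventually_le_of_le_mul_sub {r : ℝ → ℝ} (hx : IsPrimitiveFrom x g a) (hxc : Continuous x)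
    (hr0 : ∀ u, 0 ≤ r u) (hr : ∀ s t, IntervalIntegrable r volume s t)
    (hrdiv : ∀ T, Tendsto (fun t => ∫ u in T..t, r u) atTop atTop) {d d' : ℝ}
    (hg : ∀ᶠ u in atTop, g u ≤ r u * (d - x u)) (hdd' : d < d') :
    ∀ᶠ t in atTop, x t ≤ d' := by
  obtain ⟨T, hT⟩ := eventually_atTop.1 (hg.and (eventually_ge_atTop a))
  have haT : a ≤ T := (hT T le_rfl).2
  obtain ⟨t₁, ht₁T, ht₁⟩ : ∃ t₁, T ≤ t₁ ∧ x t₁ ≤ d' := by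
    by_contra! hno
    have hdecay : ∀ t, T ≤ t → x t ≤ x T + (d - d') * ∫ u in T..t, r u := by
      intro t ht
      rw [← intervalIntegral.integral_const_mul]
      refine hx.le_add_integral haT ht ((hr T t).1.const_mul _) ?_
      filter_upwards [ae_restrict_mem measurableSet_Ioc] with u hu
      have := mul_le_mul_of_nonneg_left (show d - x u ≤ d - d' by linarith [hno u hu.1.le]) (hr0 u)
      linarith [(hT u hu.1.le).1]
    have hbot : Tendsto (fun t => x T + (d - d') * ∫ u in T..t, r u) atTop atBot :=
      tendsto_atBot_add_const_left _ _
        ((tendsto_const_mul_atBot_of_neg (by linarith)).2 (hrdiv T))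
    obtain ⟨t, hbt, hTt⟩ := ((hbot.eventually (eventually_le_atBot d')).and
      (eventually_ge_atTop T)).exists
    linarith [hdecay t hTt, hno t hTt]
  filter_upwards [eventually_ge_atTop t₁] with t ht
  by_contra! hxt
  obtain ⟨τ, hτ, hτd, habove⟩ := exists_last_le hxc ht ht₁
  have hτT : T ≤ τ := ht₁T.trans hτ.1
  have := hx.le_add_mul (K := 0) (haT.trans hτT) hτ.2 <| by
    filter_upwards [ae_restrict_mem measurableSet_Ioc] with u hu
    exact (hT u (hτT.trans hu.1.le)).1.trans
      (mul_nonpos_of_nonneg_of_nonpos (hr0 u) (by linarith [habove u hu]))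
  linarith

theorem limsup_le_of_le_mul_sub {r : ℝ → ℝ} (hx : IsPrimitiveFrom x g a) (hxc : Continuous x)
    (hbdd : IsBoundedUnder (· ≥ ·) atTop x) (hr0 : ∀ u, 0 ≤ r u)
    (hr : ∀ s t, IntervalIntegrable r volume s t)
    (hrdiv : ∀ T, Tendsto (fun t => ∫ u in T..t, r u) atTop atTop) {d : ℝ}
    (hg : ∀ᶠ u in atTop, g u ≤ r u * (d - x u)) : limsup x atTop ≤ d :=
  le_of_forall_gt_imp_ge_of_dense fun _ hd' => limsup_le_of_le hbdd.isCoboundedUnder_le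
    (hx.eventually_le_of_le_mul_sub hxc hr0 hr hrdiv hg hd')

theorem le_liminf_of_mul_sub_le {r : ℝ → ℝ} (hx : IsPrimitiveFrom x g a) (hxc : Continuous x)
    (hbdd : IsBoundedUnder (· ≤ ·) atTop x) (hr0 : ∀ u, 0 ≤ r u)
    (hr : ∀ s t, IntervalIntegrable r volume s t)
    (hrdiv : ∀ T, Tendsto (fun t => ∫ u in T..t, r u) atTop atTop) {c : ℝ}
    (hg : ∀ᶠ u in atTop, r u * (c - x u) ≤ g u) : c ≤ liminf x atTop := by
  refine le_of_forall_lt_imp_le_of_dense fun c' hc' => le_liminf_of_le hbdd.isCoboundedUnder_ge ?_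
  have := hx.neg.eventually_le_of_le_mul_sub hxc.neg hr0 hr hrdiv (d := -c)
    (hg.mono fun u hu => by linarith) (neg_lt_neg hc')
  exact this.mono fun t ht => by linarith

end IsPrimitiveFrom

theorem mul_sub_le_mul_sub {r C F y c : ℝ} (hr0 : 0 ≤ r) (hrC : r ≤ C) (hF : F ≤ c) (hy : y ≤ c) :
    r * (F - y) ≤ C * (c - y) :=
  calc r * (F - y) ≤ r * (c - y) := by gcongr
    _ ≤ C * (c - y) := mul_le_mul_of_nonneg_right hrC (sub_nonneg.2 hy)

namespace IsPrimitiveFrom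

variable {x r F : ℝ → ℝ} {a c C : ℝ}

theorem forall_lt_of_relaxation (hx : IsPrimitiveFrom x (fun u => r u * (F u - x u)) a)
    (hxc : Continuous x) (hr0 : ∀ u, 0 ≤ r u) (hrC : ∀ᵐ u, r u ≤ C) (hC : 0 < C) (ha : x a < c)
    (hF : ∀ u, a < u → (∀ s ∈ Icc a u, x s ≤ c) → F u ≤ c) : ∀ t, a ≤ t → x t < c :=
  hx.forall_lt_of_rate_le hxc hC ha fun _ _ hle => by
    filter_upwards [ae_restrict_of_ae hrC, ae_restrict_mem measurableSet_Ioc] with u hrC hu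
    exact mul_sub_le_mul_sub (hr0 u) hrC (hF u hu.1 fun s hs => hle s ⟨hs.1, hs.2.trans hu.2⟩)
      (hle u ⟨hu.1.le, hu.2⟩)

theorem forall_gt_of_relaxation (hx : IsPrimitiveFrom x (fun u => r u * (F u - x u)) a)
    (hxc : Continuous x) (hr0 : ∀ u, 0 ≤ r u) (hrC : ∀ᵐ u, r u ≤ C) (hC : 0 < C) (ha : c < x a)
    (hF : ∀ u, a < u → (∀ s ∈ Icc a u, c ≤ x s) → c ≤ F u) : ∀ t, a ≤ t → c < x t := by
  have := hx.neg.forall_lt_of_rate_le hxc.neg hC (c := -c) (neg_lt_neg ha) fun _ _ hle => by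
    filter_upwards [ae_restrict_of_ae hrC, ae_restrict_mem measurableSet_Ioc] with u hrC hu
    have := mul_sub_le_mul_sub (hr0 u) hrC
      (neg_le_neg (hF u hu.1 fun s hs => neg_le_neg_iff.1 (hle s ⟨hs.1, hs.2.trans hu.2⟩)))
      (hle u ⟨hu.1.le, hu.2⟩)
    linarith
  exact fun t ht => neg_lt_neg_iff.1 (this t ht)

end IsPrimitiveFrom

section DelayEquation

variable {f h r x F : ℝ → ℝ} {C : ℝ}

theorem delay_solution_pos (hx : IsPrimitiveFrom x (fun u => r u * (F u - x u)) 0)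
    (hxc : Continuous x) (hr0 : ∀ u, 0 ≤ r u) (hrC : ∀ᵐ u, r u ≤ C) (hC : 0 < C)
    (hf : ∀ y, 0 ≤ y → 0 ≤ f y)
    (hF : ∀ u, 0 ≤ u → ∀ c, (∀ s ∈ Icc (h u) u, c ≤ f (x s)) → c ≤ F u)
    (hpast : ∀ s ≤ 0, 0 ≤ x s) (hx0 : 0 < x 0) : ∀ t, 0 ≤ t → 0 < x t :=
  hx.forall_gt_of_relaxation hxc hr0 hrC hC hx0 fun u hu hle => hF u hu.le 0 fun s hs =>
    hf _ <| (le_or_gt s 0).elim (hpast s) fun hs0 => hle s ⟨hs0.le, hs.2⟩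

theorem delay_solution_le (hx : IsPrimitiveFrom x (fun u => r u * (F u - x u)) 0)
    (hxc : Continuous x) (hr0 : ∀ u, 0 ≤ r u) (hrC : ∀ᵐ u, r u ≤ C) (hC : 0 < C) {B : ℝ}
    (hf : ∀ y, 0 ≤ y → f y ≤ max B y)
    (hF : ∀ u, 0 ≤ u → ∀ c, (∀ s ∈ Icc (h u) u, f (x s) ≤ c) → F u ≤ c)
    (hx0 : ∀ s, 0 ≤ x s) (hpast : ∀ s ≤ 0, x s ≤ B) (t : ℝ) : x t ≤ B := by
  refine le_of_forall_gt_imp_ge_of_dense fun c hc => ?_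
  rcases le_or_gt t 0 with ht | ht
  · exact (hpast t ht).trans hc.le
  refine (hx.forall_lt_of_relaxation hxc hr0 hrC hC ((hpast 0 le_rfl).trans_lt hc)
    (fun u hu hle => hF u hu.le c fun s hs => (hf _ (hx0 s)).trans (max_le hc.le ?_)) t ht.le).le
  exact (le_or_gt s 0).elim (fun hs0 => (hpast s hs0).trans hc.le) fun hs0 => hle s ⟨hs0.le, hs.2⟩

theorem delay_solution_eventually_ge (hx : IsPrimitiveFrom x (fun u => r u * (F u - x u)) 0)
    (hxc : Continuous x) (hr0 : ∀ u, 0 ≤ r u) (hrC : ∀ᵐ u, r u ≤ C) (hC : 0 < C)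
    (hh : Tendsto h atTop atTop)
    (hF : ∀ u, 0 ≤ u → ∀ c, (∀ s ∈ Icc (h u) u, c ≤ f (x s)) → c ≤ F u)
    (hpos : ∀ t, 0 ≤ t → 0 < x t) {B : ℝ} (hB : ∀ t, x t ≤ B)
    (hf : ∃ ε₀ > 0, ∀ ε ∈ Ioc 0 ε₀, ∀ y ∈ Icc ε B, ε ≤ f y) :
    ∃ a > 0, ∀ᶠ t in atTop, a ≤ x t := by
  obtain ⟨ε₀, hε₀, hfε₀⟩ := hf
  obtain ⟨T, hT⟩ := eventually_atTop.1 (hh.eventually_ge_atTop 0)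
  have hT0 : 0 ≤ max T 0 := le_max_right _ _
  obtain ⟨s₀, hs₀, hmin⟩ := isCompact_Icc.exists_isMinOn (nonempty_Icc.2 hT0) hxc.continuousOn
  have hmin₀ : 0 < min ε₀ (x s₀) := lt_min hε₀ (hpos s₀ hs₀.1)
  set a := min ε₀ (x s₀) / 2
  have ha : 0 < a := half_pos hmin₀
  have haε₀ : a ≤ ε₀ := (half_le_self hmin₀.le).trans (min_le_left _ _)
  have has₀ : a < x s₀ := (half_lt_self hmin₀).trans_le (min_le_right _ _)
  refine ⟨a, ha, eventually_atTop.2 ⟨max T 0, fun t ht => ?_⟩⟩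
  refine ((hx.mono hT0).forall_gt_of_relaxation hxc hr0 hrC hC (has₀.trans_le (hmin ⟨hT0, le_rfl⟩))
    (fun u hu hle => hF u (hT0.trans hu.le) a fun s hs => hfε₀ a ⟨ha, haε₀⟩ _ ⟨?_, hB s⟩) t ht).le
  rcases lt_or_ge s (max T 0) with hsT | hsT
  · exact has₀.le.trans (hmin ⟨(hT u ((le_max_left _ _).trans hu.le)).trans hs.1, hsT.le⟩)
  · exact hle s ⟨hsT, hs.2⟩

theorem delay_solution_limsup_le (hx : IsPrimitiveFrom x (fun u => r u * (F u - x u)) 0)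
    (hxc : Continuous x) (hbdd : IsBoundedUnder (· ≥ ·) atTop x) (hr0 : ∀ u, 0 ≤ r u)
    (hr : ∀ s t, IntervalIntegrable r volume s t)
    (hrdiv : ∀ T, Tendsto (fun t => ∫ u in T..t, r u) atTop atTop) (hh : Tendsto h atTop atTop)
    (hF : ∀ u, 0 ≤ u → ∀ c, (∀ s ∈ Icc (h u) u, f (x s) ≤ c) → F u ≤ c)
    {lo hi d : ℝ} (hev : ∀ᶠ t in atTop, x t ∈ Icc lo hi) (hf : ∀ y ∈ Icc lo hi, f y ≤ d) :
    limsup x atTop ≤ d :=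
  hx.limsup_le_of_le_mul_sub hxc hbdd hr0 hr hrdiv <| by
    filter_upwards [eventually_forall_mem_Icc_of_tendsto hh hev, eventually_ge_atTop 0]
      with u hu hu0
    exact mul_le_mul_of_nonneg_left (sub_le_sub_right (hF u hu0 d fun s hs => hf _ (hu s hs)) _)
      (hr0 u)

theorem delay_solution_le_liminf (hx : IsPrimitiveFrom x (fun u => r u * (F u - x u)) 0)
    (hxc : Continuous x) (hbdd : IsBoundedUnder (· ≤ ·) atTop x) (hr0 : ∀ u, 0 ≤ r u)
    (hr : ∀ s t, IntervalIntegrable r volume s t)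
    (hrdiv : ∀ T, Tendsto (fun t => ∫ u in T..t, r u) atTop atTop) (hh : Tendsto h atTop atTop)
    (hF : ∀ u, 0 ≤ u → ∀ c, (∀ s ∈ Icc (h u) u, c ≤ f (x s)) → c ≤ F u)
    {lo hi c : ℝ} (hev : ∀ᶠ t in atTop, x t ∈ Icc lo hi) (hf : ∀ y ∈ Icc lo hi, c ≤ f y) :
    c ≤ liminf x atTop :=
  hx.le_liminf_of_mul_sub_le hxc hbdd hr0 hr hrdiv <| by
    filter_upwards [eventually_forall_mem_Icc_of_tendsto hh hev, eventually_ge_atTop 0]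
      with u hu hu0
    exact mul_le_mul_of_nonneg_left (sub_le_sub_right (hF u hu0 c fun s hs => hf _ (hu s hs)) _)
      (hr0 u)

end DelayEquation

theorem exists_bound_comp_on_Iic {f x : ℝ → ℝ} (hf : Continuous f) (hx : Continuous x)
    {Φ : ℝ} (hΦ : ∀ s ≤ 0, |x s| ≤ Φ) (b : ℝ) : ∃ D, ∀ s ≤ b, |f (x s)| ≤ D := by
  obtain ⟨A, hA⟩ := isCompact_Icc.exists_bound_of_continuousOn (s := Icc 0 b) hx.continuousOn
  obtain ⟨D, hD⟩ := isCompact_Icc.exists_bound_of_continuousOn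
    (s := Icc (-max Φ A) (max Φ A)) hf.continuousOn
  refine ⟨D, fun s hs => hD (x s) (abs_le.1 ?_)⟩
  rcases le_or_gt s 0 with hs0 | hs0
  · exact (hΦ s hs0).trans (le_max_left _ _)
  · exact (hA s ⟨hs0.le, hs⟩).trans (le_max_right _ _)

theorem integrableOn_delay_rhs {f h r x : ℝ → ℝ} {μ : ℝ → Measure ℝ} {C : ℝ}
    (hf : Continuous f) (hxc : Continuous x) (hr : Measurable r) (hr0 : ∀ u, 0 ≤ r u)
    (hrC : ∀ᵐ u, r u ≤ C) (hμ_prob : ∀ u, 0 ≤ u → IsProbabilityMeasure (μ u))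
    (hμ_supp : ∀ u, 0 ≤ u → μ u (Icc (h u) u)ᶜ = 0)
    (hμ_meas : ∀ g : ℝ → ℝ, Measurable g → (∃ C : ℝ, ∀ y : ℝ, |g y| ≤ C) →
      Measurable (fun t => ∫ s, g s ∂(μ t)))
    (hfx : ∀ b, ∃ D, ∀ s ≤ b, |f (x s)| ≤ D) (b : ℝ) :
    IntegrableOn (fun u => r u * ((∫ s, f (x s) ∂(μ u)) - x u)) (Ioc 0 b) := by
  obtain ⟨D, hD⟩ := hfx b
  set fb := fun s => f (x (min s b))
  have hfb : Continuous fb := hf.comp (hxc.comp (continuous_id.min continuous_const))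
  have hfbD : ∀ s, |fb s| ≤ D := fun s => hD _ (min_le_right _ _)
  have hFeq : EqOn (fun u => ∫ s, fb s ∂(μ u)) (fun u => ∫ s, f (x s) ∂(μ u)) (Ioc 0 b) :=
    fun u hu => integral_congr_ae <| (ae_iff.2 (hμ_supp u hu.1.le)).mono fun s hs => by
      simp only [fb, min_eq_left (hs.2.trans hu.2)]
  have hFb : IntegrableOn (fun u => ∫ s, fb s ∂(μ u)) (Ioc 0 b) := by
    refine Measure.integrableOn_of_bounded measure_Ioc_lt_top.ne
      (hμ_meas fb hfb.measurable ⟨D, hfbD⟩).aestronglyMeasurable (M := D) ?_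
    filter_upwards [ae_restrict_mem measurableSet_Ioc] with u hu
    have := hμ_prob u hu.1.le
    simpa using norm_integral_le_of_norm_le_const (μ := μ u) (f := fb)
      (Eventually.of_forall fun s => (Real.norm_eq_abs _).le.trans (hfbD s))
  refine Integrable.bdd_mul ((hFb.congr_fun hFeq measurableSet_Ioc).sub
    hxc.integrableOn_Ioc) hr.aestronglyMeasurable.restrict (c := C) ?_
  filter_upwards [ae_restrict_of_ae hrC] with u hu
  rwa [Real.norm_of_nonneg (hr0 u)]

section FixedPoints

variable {f x : ℝ → ℝ} {K M : ℝ}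

theorem le_apply_of_forall_lt_apply (hf : Continuous f) (hK : 0 < K)
    (hbelow : ∀ y, 0 < y → y < K → y < f y) : K ≤ f K := by
  have hK' : K ∈ closure (Ioo 0 K) := by
    rw [closure_Ioo hK.ne]
    exact right_mem_Icc.2 hK.le
  exact closure_lt_subset_le continuous_id hf (closure_mono (fun y hy => hbelow y hy.1 hy.2) hK')

theorem exists_pos_forall_le_apply (hf : Continuous f) (hK : 0 < K)
    (hbelow : ∀ y, 0 < y → y < K → y < f y) (habove : ∀ y, K < y → 0 < f y) (B : ℝ) :
    ∃ ε₀ > 0, ∀ ε ∈ Ioc 0 ε₀, ∀ y ∈ Icc ε B, ε ≤ f y := by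
  obtain ⟨y₀, hy₀, hmin⟩ :=
    isCompact_Icc.exists_isMinOn (nonempty_Icc.2 (le_max_left K B)) hf.continuousOn
  have hfy₀ : 0 < f y₀ := hy₀.1.eq_or_lt.elim
    (fun h => h ▸ hK.trans_le (le_apply_of_forall_lt_apply hf hK hbelow)) (habove y₀)
  refine ⟨min K (f y₀), lt_min hK hfy₀, fun ε hε y hy => ?_⟩
  rcases lt_or_ge y K with hyK | hyK
  · exact hy.1.trans (hbelow y (hε.1.trans_le hy.1) hyK).le
  · exact hε.2.trans ((min_le_right _ _).trans (hmin ⟨hyK, hy.2.trans (le_max_right _ _)⟩))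

theorem apply_le_max (hM : ∀ y ∈ Icc 0 K, f y ≤ M) (habove : ∀ y, K < y → f y < y) {B : ℝ}
    (hMB : M ≤ B) (y : ℝ) (hy : 0 ≤ y) : f y ≤ max B y := by
  rcases le_or_gt y K with hyK | hyK
  · exact (hM y ⟨hy, hyK⟩).trans (hMB.trans (le_max_left _ _))
  · exact (habove y hyK).le.trans (le_max_right _ _)

theorem limsup_le_of_forall_limsup_le (hf : Continuous f) (hM : ∀ y ∈ Icc 0 K, f y ≤ M)
    (habove : ∀ y, K < y → f y < y) (hx0 : ∀ t, 0 ≤ x t) (hbdd : IsBoundedUnder (· ≤ ·) atTop x)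
    (hatt : ∀ hi d, (∀ᶠ t in atTop, x t ∈ Icc 0 hi) → (∀ y ∈ Icc 0 hi, f y ≤ d) →
      limsup x atTop ≤ d) :
    limsup x atTop ≤ M := by
  set S := limsup x atTop
  have hS0 : 0 ≤ S := le_limsup_of_frequently_le (Frequently.of_forall hx0) hbdd
  obtain ⟨y, hyS, hy0, hyS'⟩ := (isClosed_le continuous_const hf).inter_Icc_nonempty_of_forall_pos
    hS0 fun ε hε => by
      obtain ⟨y, hy, hmax⟩ := isCompact_Icc.exists_isMaxOn
        (nonempty_Icc.2 (by linarith : (0 : ℝ) ≤ S + ε)) hf.continuousOn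
      refine ⟨y, hatt (S + ε) (f y) ?_ fun z hz => hmax hz, by linarith [hy.1], hy.2⟩
      filter_upwards [eventually_lt_of_limsup_lt (lt_add_of_pos_right S hε) hbdd] with t ht
        using ⟨hx0 t, ht.le⟩
  rcases le_or_gt y K with hyK | hyK
  · exact hyS.trans (hM y ⟨hy0, hyK⟩)
  · exact absurd hyS (not_le.2 ((habove y hyK).trans_le hyS'))

theorem le_liminf_of_forall_le_liminf {m : ℝ} (hf : Continuous f)
    (hbelow : ∀ y, 0 < y → y < K → y < f y) (hm : ∀ y ∈ Icc K M, m ≤ f y)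
    (hbdd : IsBoundedUnder (· ≤ ·) atTop x) (hbdd' : IsBoundedUnder (· ≥ ·) atTop x)
    (hpos : 0 < liminf x atTop) (hM : limsup x atTop ≤ M)
    (hatt : ∀ lo hi c, (∀ᶠ t in atTop, x t ∈ Icc lo hi) → (∀ y ∈ Icc lo hi, c ≤ f y) →
      c ≤ liminf x atTop) :
    m ≤ liminf x atTop := by
  set ℓ := liminf x atTop
  set S := limsup x atTop
  have hℓS : ℓ ≤ S := liminf_le_limsup hbdd hbdd'
  obtain ⟨y, hyℓ, hyl, hyS⟩ := (isClosed_le hf continuous_const).inter_Icc_nonempty_of_forall_pos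
    hℓS fun ε hε => by
      obtain ⟨y, hy, hmin⟩ := isCompact_Icc.exists_isMinOn
        (nonempty_Icc.2 (by linarith : ℓ - ε ≤ S + ε)) hf.continuousOn
      refine ⟨y, hatt _ _ (f y) ?_ fun z hz => hmin hz, hy⟩
      filter_upwards [eventually_lt_of_lt_liminf (sub_lt_self ℓ hε) hbdd',
        eventually_lt_of_limsup_lt (lt_add_of_pos_right S hε) hbdd] with t h₁ h₂
        using ⟨h₁.le, h₂.le⟩
  rcases lt_or_ge y K with hyK | hyK
  · exact absurd hyℓ (not_le.2 (hyl.trans_lt (hbelow y (hpos.trans_le hyl) hyK)))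
  · exact (hm y ⟨hyK, hyS.trans hM⟩).trans hyℓ

end FixedPoints

theorem delay_solution_attracting_interval {f h r x F : ℝ → ℝ} {K M m C Φ : ℝ} (hK : 0 < K)
    (hf : Continuous f) (hf_nonneg : ∀ y, 0 ≤ y → 0 ≤ f y)
    (hf_below : ∀ y, 0 < y → y < K → y < f y) (hf_above : ∀ y, K < y → 0 < f y ∧ f y < y)
    (hfM : ∀ y ∈ Icc 0 K, f y ≤ M) (hfm : ∀ y ∈ Icc K M, m ≤ f y) (hh : Tendsto h atTop atTop)
    (hr_meas : Measurable r) (hr0 : ∀ u, 0 ≤ r u) (hrC : ∀ᵐ u, r u ≤ C) (hC : 0 < C)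
    (hr_div : ¬ IntegrableOn r (Ioi 0))
    (hFle : ∀ u, 0 ≤ u → ∀ c, (∀ s ∈ Icc (h u) u, f (x s) ≤ c) → F u ≤ c)
    (hFge : ∀ u, 0 ≤ u → ∀ c, (∀ s ∈ Icc (h u) u, c ≤ f (x s)) → c ≤ F u)
    (hx : IsPrimitiveFrom x (fun u => r u * (F u - x u)) 0) (hxc : Continuous x)
    (hpast_nonneg : ∀ s ≤ 0, 0 ≤ x s) (hpast_le : ∀ s ≤ 0, x s ≤ Φ) (hx0 : 0 < x 0) :
    m ≤ liminf x atTop ∧ limsup x atTop ≤ M := by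
  have hr : ∀ s t, IntervalIntegrable r volume s t := fun _ _ =>
    (intervalIntegrable_const (c := C)).mono_fun' hr_meas.aestronglyMeasurable <|
      ae_restrict_of_ae <| hrC.mono fun u hu => (Real.norm_of_nonneg (hr0 u)).trans_le hu
  have hrdiv := tendsto_intervalIntegral_atTop_of_not_integrableOn hr0 hr hr_div
  have hpos := delay_solution_pos hx hxc hr0 hrC hC hf_nonneg hFge hpast_nonneg hx0
  have hx_nonneg : ∀ t, 0 ≤ x t := fun t =>
    (le_or_gt t 0).elim (hpast_nonneg t) fun ht => (hpos t ht.le).le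
  have hB := delay_solution_le hx hxc hr0 hrC hC
    (apply_le_max hfM (fun y hy => (hf_above y hy).2) (le_max_left M Φ)) hFle hx_nonneg
    fun s hs => (hpast_le s hs).trans (le_max_right _ _)
  have hbdd : IsBoundedUnder (· ≤ ·) atTop x := isBoundedUnder_of ⟨_, hB⟩
  have hbdd' : IsBoundedUnder (· ≥ ·) atTop x := isBoundedUnder_of ⟨0, hx_nonneg⟩
  obtain ⟨a, ha, hax⟩ := delay_solution_eventually_ge hx hxc hr0 hrC hC hh hFge hpos hB
    (exists_pos_forall_le_apply hf hK hf_below (fun y hy => (hf_above y hy).1) _)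
  have hlimsup := limsup_le_of_forall_limsup_le hf hfM (fun y hy => (hf_above y hy).2) hx_nonneg
    hbdd fun _ _ => delay_solution_limsup_le hx hxc hbdd' hr0 hr hrdiv hh hFle
  exact ⟨le_liminf_of_forall_le_liminf hf hf_below hfm hbdd hbdd'
    (ha.trans_le (le_liminf_of_le hbdd.isCoboundedUnder_ge hax)) hlimsup
    fun _ _ _ => delay_solution_le_liminf hx hxc hbdd hr0 hr hrdiv hh hFge, hlimsup⟩

theorem distributed_delay_attracting_interval_general
    (f : ℝ → ℝ) (K : ℝ) (hK : 0 < K)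
    (h r : ℝ → ℝ) (μ : ℝ → Measure ℝ) (φ : ℝ → ℝ)
    (hf_cont : Continuous f)
    (hf_nonneg : ∀ y : ℝ, 0 ≤ y → 0 ≤ f y)
    (hf_below : ∀ y : ℝ, 0 < y → y < K → y < f y)
    (hf_above : ∀ y : ℝ, K < y → 0 < f y ∧ f y < y)
    (hh_tend : Tendsto h atTop atTop)
    (hr_meas : Measurable r)
    (hr_nonneg : ∀ t : ℝ, 0 ≤ r t)
    (hr_bdd : ∃ C : ℝ, ∀ᵐ t ∂volume, r t ≤ C)
    (hr_div : ¬ IntegrableOn r (Ici (0 : ℝ)))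
    (hμ_prob : ∀ t : ℝ, 0 ≤ t → IsProbabilityMeasure (μ t))
    (hμ_supp : ∀ t : ℝ, 0 ≤ t → μ t (Icc (h t) t)ᶜ = 0)
    (hμ_meas : ∀ g : ℝ → ℝ, Measurable g → (∃ C : ℝ, ∀ y : ℝ, |g y| ≤ C) →
      Measurable (fun t => ∫ s, g s ∂(μ t)))
    (hφ_bdd : ∃ C : ℝ, ∀ t : ℝ, t ≤ 0 → |φ t| ≤ C)
    (hφ_nonneg : ∀ t : ℝ, t ≤ 0 → 0 ≤ φ t)
    (hφ_pos : 0 < φ 0)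
    (M m : ℝ)
    (hM : M = sSup (f '' Icc (0 : ℝ) K))
    (hm : m = sInf (f '' Icc K M))
    (x : ℝ → ℝ)
    (hx_cont : Continuous x)
    (hx_init : ∀ t : ℝ, t ≤ 0 → x t = φ t)
    (hx_sol : ∀ t : ℝ, 0 ≤ t →
      x t = φ 0 + ∫ u in (0:ℝ)..t, r u * ((∫ s, f (x s) ∂(μ u)) - x u))
    :
    m ≤ liminf x atTop ∧ limsup x atTop ≤ M := by
  obtain ⟨C, hC, hrC⟩ : ∃ C, 0 < C ∧ ∀ᵐ t, r t ≤ C :=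
    let ⟨C, hC⟩ := hr_bdd; ⟨max C 1, by positivity, hC.mono fun _ ht => ht.trans (le_max_left _ _)⟩
  obtain ⟨Φ, hΦ⟩ := hφ_bdd
  have hpast : ∀ s ≤ 0, |x s| ≤ Φ := fun s hs => hx_init s hs ▸ hΦ s hs
  set F := fun u => ∫ s, f (x s) ∂(μ u)
  have hFle : ∀ u, 0 ≤ u → ∀ c, (∀ s ∈ Icc (h u) u, f (x s) ≤ c) → F u ≤ c := fun u hu _ =>
    have := hμ_prob u hu
    integral_le_of_forall_mem_le isCompact_Icc (hμ_supp u hu) (hf_cont.comp hx_cont)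
  have hFge : ∀ u, 0 ≤ u → ∀ c, (∀ s ∈ Icc (h u) u, c ≤ f (x s)) → c ≤ F u := fun u hu _ =>
    have := hμ_prob u hu
    le_integral_of_forall_mem_le isCompact_Icc (hμ_supp u hu) (hf_cont.comp hx_cont)
  have hx : IsPrimitiveFrom x (fun u => r u * (F u - x u)) 0 :=
    .of_eq_add_integral (integrableOn_delay_rhs hf_cont hx_cont hr_meas hr_nonneg hrC hμ_prob
      hμ_supp hμ_meas (exists_bound_comp_on_Iic hf_cont hx_cont hpast))
      fun t ht => by rw [hx_init 0 le_rfl]; exact hx_sol t ht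
  exact delay_solution_attracting_interval hK hf_cont hf_nonneg hf_below hf_above
    (fun y hy => hM ▸ le_csSup (isCompact_Icc.image hf_cont).bddAbove (mem_image_of_mem f hy))
    (fun y hy => hm ▸ csInf_le (isCompact_Icc.image hf_cont).bddBelow (mem_image_of_mem f hy))
    hh_tend hr_meas hr_nonneg hrC hC (by rwa [integrableOn_Ici_iff_integrableOn_Ioi] at hr_div)
    hFle hFge hx hx_cont (fun s hs => hx_init s hs ▸ hφ_nonneg s hs)
    (fun s hs => (le_abs_self _).trans (hpast s hs)) (hx_init 0 le_rfl ▸ hφ_pos)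

theorem distributed_delay_attracting_interval
    (f : ℝ → ℝ) (L K : ℝ) (hL : 0 ≤ L) (hK : 0 < K)
    (h r : ℝ → ℝ) (μ : ℝ → Measure ℝ) (φ : ℝ → ℝ)
    (hf_cont : Continuous f)
    (hf_nonneg : ∀ y : ℝ, 0 ≤ y → 0 ≤ f y)
    (hf_lip : ∀ u v : ℝ, 0 ≤ u → 0 ≤ v → |f u - f v| ≤ L * |u - v|)
    (hf_zero : f 0 = 0)
    (hf_below : ∀ y : ℝ, 0 < y → y < K → y < f y)
    (hf_above : ∀ y : ℝ, K < y → 0 < f y ∧ f y < y)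
    (hh_meas : Measurable h)
    (hh_le : ∀ t : ℝ, 0 ≤ t → h t ≤ t)
    (hh_tend : Tendsto h atTop atTop)
    (hr_meas : Measurable r)
    (hr_nonneg : ∀ t : ℝ, 0 ≤ r t)
    (hr_bdd : ∃ C : ℝ, ∀ᵐ t ∂volume, r t ≤ C)
    (hr_div : ¬ IntegrableOn r (Ici (0 : ℝ)))
    (hμ_prob : ∀ t : ℝ, 0 ≤ t → IsProbabilityMeasure (μ t))
    (hμ_supp : ∀ t : ℝ, 0 ≤ t → μ t (Icc (h t) t)ᶜ = 0)
    (hμ_meas : ∀ g : ℝ → ℝ, Measurable g → (∃ C : ℝ, ∀ y : ℝ, |g y| ≤ C) →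
      Measurable (fun t => ∫ s, g s ∂(μ t)))
    (hφ_cont : ContinuousOn φ (Iic (0 : ℝ)))
    (hφ_bdd : ∃ C : ℝ, ∀ t : ℝ, t ≤ 0 → |φ t| ≤ C)
    (hφ_nonneg : ∀ t : ℝ, t ≤ 0 → 0 ≤ φ t)
    (hφ_pos : 0 < φ 0)
    (M m xmax xmin : ℝ)
    (hM : M = sSup (f '' Icc (0 : ℝ) K))
    (hm : m = sInf (f '' Icc K M))
    (hMK : K < M)
    (hxmax_mem : xmax ∈ Icc (0 : ℝ) K) (hxmax_val : f xmax = M)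
    (hxmax_greatest : ∀ y ∈ Icc (0 : ℝ) K, f y = M → y ≤ xmax)
    (hxmin_mem : xmin ∈ Icc K M) (hxmin_val : f xmin = m)
    (hxmin_least : ∀ y ∈ Icc K M, f y = m → xmin ≤ y)
    (hm_lt : m < xmax) (hxmax_lt : xmax < K)
    (x : ℝ → ℝ)
    (hx_cont : Continuous x)
    (hx_init : ∀ t : ℝ, t ≤ 0 → x t = φ t)
    (hx_sol : ∀ t : ℝ, 0 ≤ t →
      x t = φ 0 + ∫ u in (0:ℝ)..t, r u * ((∫ s, f (x s) ∂(μ u)) - x u))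
    :
    m ≤ liminf x atTop ∧ limsup x atTop ≤ M :=
  distributed_delay_attracting_interval_general f K hK h r μ φ hf_cont hf_nonneg hf_below hf_above
    hh_tend hr_meas hr_nonneg hr_bdd hr_div hμ_prob hμ_supp hμ_meas hφ_bdd hφ_nonneg hφ_pos M m hM
    hm x hx_cont hx_init hx_sol
end

section
/- Suppose f satisfies hypothesis (a1) and, with M = max_{x ∈ [0,K]} f(x) > K, m = min_{x ∈ [K,M]} f(x), x_max the greatest point of [0,K] where f attains M, and x_min the least point of [K,M] where f attains m, assume m = f(x_min) < x_max < K. Then for every a ∈ (m, x_max) and every b ∈ (K, M) with min_{x ∈ [K,b]} f(x) < a, there exist a constant r > 0, a Lebesgue measurable function h : [0,∞) → ℝ with h(t) ≤ t and h(t) → ∞ as t → ∞, a continuous bounded function φ : (−∞,0] → [0,∞) with φ(0) > 0, and a continuous x : ℝ → ℝ with x(t) = φ(t) for t ≤ 0 and x(t) = φ(0) + ∫_0^t r·(f(x(h(u))) − x(u)) du for all t ≥ 0, such that liminf_{t→∞} x(t) = a and limsup_{t→∞} x(t) = b. -/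
/-!
The solution is the sinusoid `x t = p + q sin t` with `p - q = a`, `p + q = b`. It solves
`x' = r (f (x ∘ h) - x)` as soon as `f (x (h t)) = x t + x' t / r`, and for large `r` this value
lies in `[f z, f xmax]`, where `z ∈ [K, b]` minimizes `f` on `[K, b]`. Since `[xmax, z] ⊆ [a, b]`,
an antitone (hence measurable) right inverse of `f` on `[xmax, z]` prescribes `x (h t)`, and the
delay `h t` is recovered through `arcsin`, shifted by a multiple of `2π` into `(t - 2π, t]`.
-/

open MeasureTheory Filter Set Real

theorem Function.Periodic.frequently_atTop_eq {g : ℝ → ℝ} {T : ℝ} (hg : Function.Periodic g T)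
    (hT : 0 < T) (s : ℝ) : ∃ᶠ t in atTop, g t = g s :=
  (tendsto_atTop_add_const_left _ s (tendsto_natCast_atTop_atTop.atTop_mul_const hT)).frequently
    (Frequently.of_forall fun n => (hg.nat_mul n) s)

theorem Function.Periodic.limsup_atTop_eq_of_forall_le {g : ℝ → ℝ} {T s : ℝ}
    (hg : Function.Periodic g T) (hT : 0 < T) (hs : ∀ t, g t ≤ g s) :
    limsup g atTop = g s := by
  have hfreq : ∃ᶠ t in atTop, g s ≤ g t := (hg.frequently_atTop_eq hT s).mono fun _ => ge_of_eq
  exact le_antisymm (limsup_le_of_le (.of_frequently_ge hfreq) (.of_forall hs))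
    (le_limsup_of_frequently_le hfreq (isBoundedUnder_of ⟨g s, hs⟩))

theorem Function.Periodic.liminf_atTop_eq_of_forall_ge {g : ℝ → ℝ} {T s : ℝ}
    (hg : Function.Periodic g T) (hT : 0 < T) (hs : ∀ t, g s ≤ g t) :
    liminf g atTop = g s := by
  have hfreq : ∃ᶠ t in atTop, g t ≤ g s := (hg.frequently_atTop_eq hT s).mono fun _ => le_of_eq
  exact le_antisymm (liminf_le_of_frequently_le hfreq (isBoundedUnder_of ⟨g s, hs⟩))
    (le_liminf_of_le (.of_frequently_le hfreq) (.of_forall hs))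

section Sinusoid

variable (p : ℝ) {q : ℝ}

theorem periodic_const_add_mul_sin : Function.Periodic (fun t => p + q * sin t) (2 * π) :=
  fun t => by simp only [sin_add_two_pi]

theorem const_add_mul_sin_mem_Icc (hq : 0 ≤ q) (t : ℝ) : p + q * sin t ∈ Icc (p - q) (p + q) := by
  constructor <;> nlinarith [neg_one_le_sin t, sin_le_one t]

theorem limsup_const_add_mul_sin (hq : 0 ≤ q) : limsup (fun t => p + q * sin t) atTop = p + q := by
  have hmax : p + q * sin (π / 2) = p + q := by simp
  rw [← hmax]
  exact (periodic_const_add_mul_sin p).limsup_atTop_eq_of_forall_le two_pi_pos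
    fun t => hmax ▸ (const_add_mul_sin_mem_Icc p hq t).2

theorem liminf_const_add_mul_sin (hq : 0 ≤ q) : liminf (fun t => p + q * sin t) atTop = p - q := by
  have hmin : p + q * sin (-(π / 2)) = p - q := by simp [sub_eq_add_neg]
  rw [← hmin]
  exact (periodic_const_add_mul_sin p).liminf_atTop_eq_of_forall_ge two_pi_pos
    fun t => hmin ▸ (const_add_mul_sin_mem_Icc p hq t).1

end Sinusoid

theorem exists_antitone_rightInvOn_Icc {f : ℝ → ℝ} {α β : ℝ} (hαβ : α ≤ β)
    (hf : ContinuousOn f (Icc α β)) :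
    ∃ g : ℝ → ℝ, Antitone g ∧ (∀ w, g w ∈ Icc α β) ∧ RightInvOn g f (Icc (f β) (f α)) := by
  set S : ℝ → Set ℝ := fun w => insert β (Icc α β ∩ f ⁻¹' Iic w)
  have hS_sub : ∀ w, S w ⊆ Icc α β := fun w =>
    insert_subset_iff.2 ⟨right_mem_Icc.2 hαβ, inter_subset_left⟩
  have hS_bdd : ∀ w, BddBelow (S w) := fun w => bddBelow_Icc.mono (hS_sub w)
  have hS_mem : ∀ w, sInf (S w) ∈ S w := fun w =>
    (insert_eq β _ ▸ isClosed_singleton.union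
      (hf.preimage_isClosed_of_isClosed isClosed_Icc isClosed_Iic)).csInf_mem
      (insert_nonempty _ _) (hS_bdd w)
  refine ⟨fun w => sInf (S w), fun w₁ w₂ hw => ?_, fun w => hS_sub w (hS_mem w), ?_⟩
  · exact csInf_le_csInf (hS_bdd w₂) (insert_nonempty _ _)
      (insert_subset_insert (inter_subset_inter_right _ (preimage_mono (Iic_subset_Iic.2 hw))))
  · rintro w ⟨hβw, hwα⟩
    set u := sInf (S w)
    have hmem : u ∈ S w := hS_mem w
    have hu := hS_sub w hmem
    have hle : f u ≤ w := by
      rcases hmem with hβ | ⟨-, hw⟩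
      · rwa [hβ]
      · exact hw
    refine hle.antisymm (not_lt.1 fun hlt => ?_)
    obtain ⟨u', hu', hfu'⟩ := intermediate_value_Icc' hu.1 (hf.mono (Icc_subset_Icc_right hu.2))
      ⟨hlt.le, hwα⟩
    have hu'u : u' < u := hu'.2.lt_of_ne (by rintro rfl; exact hlt.ne hfu')
    exact hu'u.not_ge (csInf_le (hS_bdd w)
      (Or.inr ⟨⟨hu'.1, hu'.2.trans hu.2⟩, hfu'.le⟩))

/-- The point of `(t - 2π, t]` congruent to `arcsin s` modulo `2π`. -/
noncomputable def arcsinBelow (s t : ℝ) : ℝ := t - toIcoMod two_pi_pos 0 (t - arcsin s)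

theorem sin_arcsinBelow {s : ℝ} (hs : s ∈ Icc (-1) 1) (t : ℝ) : sin (arcsinBelow s t) = s := by
  have hshift : arcsinBelow s t = arcsin s + toIcoDiv two_pi_pos 0 (t - arcsin s) • (2 * π) := by
    rw [arcsinBelow, ← self_sub_toIcoMod]; ring
  rw [hshift, sin_periodic.zsmul, sin_arcsin' hs]

theorem arcsinBelow_le (s t : ℝ) : arcsinBelow s t ≤ t :=
  sub_le_self _ (toIcoMod_mem_Ico' two_pi_pos _).1

theorem sub_two_pi_lt_arcsinBelow (s t : ℝ) : t - 2 * π < arcsinBelow s t :=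
  sub_lt_sub_left (toIcoMod_mem_Ico' two_pi_pos _).2 t

theorem Measurable.arcsinBelow {X : Type*} [MeasurableSpace X] {σ τ : X → ℝ}
    (hσ : Measurable σ) (hτ : Measurable τ) : Measurable fun x => arcsinBelow (σ x) (τ x) := by
  simp only [_root_.arcsinBelow, toIcoMod_eq_fract_mul]
  fun_prop

theorem exists_delay_const_add_mul_sin_solution {f : ℝ → ℝ} {α β p q r : ℝ} (hαβ : α ≤ β)
    (hf : ContinuousOn f (Icc α β)) (hq : 0 < q) (hr : 0 < r) (hα : p - q ≤ α) (hβ : β ≤ p + q)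
    (hfβ : f β ≤ p - q - q / r) (hfα : p + q + q / r ≤ f α) :
    ∃ h : ℝ → ℝ, Measurable h ∧ (∀ t, h t ≤ t) ∧ (∀ t, t - 2 * π < h t) ∧
      ∀ t, r * (f (p + q * sin (h t)) - (p + q * sin t)) = q * cos t := by
  obtain ⟨g, hg_anti, hg_mem, hg_inv⟩ := exists_antitone_rightInvOn_Icc hαβ hf
  set v : ℝ → ℝ := fun t => p + q * sin t + q / r * cos t
  have hv_mem : ∀ t, v t ∈ Icc (f β) (f α) := fun t => by
    have hqr : 0 < q / r := div_pos hq hr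
    constructor <;> nlinarith [neg_one_le_sin t, sin_le_one t, neg_one_le_cos t, cos_le_one t]
  have hσ_mem : ∀ t, (g (v t) - p) / q ∈ Icc (-1) 1 := fun t => by
    obtain ⟨h₁, h₂⟩ := hg_mem (v t)
    constructor
    · rw [le_div_iff₀ hq]; linarith
    · rw [div_le_one hq]; linarith
  refine ⟨fun t => arcsinBelow ((g (v t) - p) / q) t, ?_, fun t => arcsinBelow_le _ t,
    fun t => sub_two_pi_lt_arcsinBelow _ t, fun t => ?_⟩
  · exact Measurable.arcsinBelow (((hg_anti.measurable.comp (by fun_prop)).sub_const p).div_const q)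
      measurable_id
  · rw [sin_arcsinBelow (hσ_mem t), mul_div_cancel₀ _ hq.ne', add_sub_cancel, hg_inv (hv_mem t)]
    simp only [v, add_sub_cancel_left]
    field_simp

theorem distributed_delay_attracting_set_sharp_general
    (f : ℝ → ℝ) (K : ℝ) (hK : 0 < K)
    (hf_cont : Continuous f)
    (hf_nonneg : ∀ y : ℝ, 0 ≤ y → 0 ≤ f y)
    (M m xmax : ℝ)
    (hxmax_val : f xmax = M)
    (hxmax_lt : xmax < K)
    :
    ∀ a b : ℝ, m < a → a < xmax → K < b → b < M → sInf (f '' Icc K b) < a →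
      ∃ r : ℝ, 0 < r ∧
      ∃ h : ℝ → ℝ, Measurable h ∧ (∀ t : ℝ, 0 ≤ t → h t ≤ t) ∧
        Tendsto h atTop atTop ∧
      ∃ φ : ℝ → ℝ, ContinuousOn φ (Iic (0 : ℝ)) ∧
        (∃ C : ℝ, ∀ t : ℝ, t ≤ 0 → |φ t| ≤ C) ∧
        (∀ t : ℝ, t ≤ 0 → 0 ≤ φ t) ∧ 0 < φ 0 ∧
      ∃ x : ℝ → ℝ, Continuous x ∧ (∀ t : ℝ, t ≤ 0 → x t = φ t) ∧
        (∀ t : ℝ, 0 ≤ t →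
          x t = φ 0 + ∫ u in (0:ℝ)..t, r * (f (x (h u)) - x u)) ∧
        liminf x atTop = a ∧ limsup x atTop = b := by
  intro a b _ hax hKb hbM hinf
  obtain ⟨z, hz, hfz⟩ : sInf (f '' Icc K b) ∈ f '' Icc K b :=
    (isCompact_Icc.image_of_continuousOn hf_cont.continuousOn).sInf_mem
      ((nonempty_Icc.2 hKb.le).image f)
  rw [← hfz] at hinf
  have ha : 0 < a := (hf_nonneg z (hK.le.trans hz.1)).trans_lt hinf
  obtain ⟨p, q, hpq_sub, hpq_add, hq⟩ : ∃ p q : ℝ, p - q = a ∧ p + q = b ∧ 0 < q :=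
    ⟨(a + b) / 2, (b - a) / 2, by ring, by ring, by linarith⟩
  obtain ⟨d, hd, hda, hdM⟩ : ∃ d : ℝ, 0 < d ∧ d ≤ a - f z ∧ d ≤ M - b :=
    ⟨min (a - f z) (M - b), lt_min (by linarith) (by linarith), min_le_left _ _, min_le_right _ _⟩
  obtain ⟨h, hh_meas, hh_le, hh_gt, hh_ode⟩ := exists_delay_const_add_mul_sin_solution (p := p)
    (hxmax_lt.le.trans hz.1) hf_cont.continuousOn hq (div_pos hq hd) (by linarith) (hpq_add ▸ hz.2)
    (by rw [div_div_cancel₀ hq.ne']; linarith) (by rw [div_div_cancel₀ hq.ne', hxmax_val]; linarith)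
  have hx_mem := const_add_mul_sin_mem_Icc p hq.le
  refine ⟨q / d, div_pos hq hd, h, hh_meas, fun t _ => hh_le t,
    tendsto_atTop_mono (fun t => (hh_gt t).le) (tendsto_atTop_add_const_right _ _ tendsto_id),
    fun t => p + q * sin t, by fun_prop, ⟨b, fun t _ => abs_le.2 ⟨?_, ?_⟩⟩, fun t _ => ?_, ?_,
    fun t => p + q * sin t, by fun_prop, fun _ _ => rfl, fun t _ => ?_,
    hpq_sub ▸ liminf_const_add_mul_sin p hq.le, hpq_add ▸ limsup_const_add_mul_sin p hq.le⟩
  · linarith [(hx_mem t).1]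
  · exact hpq_add ▸ (hx_mem t).2
  · linarith [(hx_mem t).1]
  · simp only [sin_zero]; linarith
  · simp only [hh_ode, intervalIntegral.integral_const_mul, integral_cos, sin_zero]
    ring

theorem distributed_delay_attracting_set_sharp
    (f : ℝ → ℝ) (L K : ℝ) (hL : 0 ≤ L) (hK : 0 < K)
    (hf_cont : Continuous f)
    (hf_nonneg : ∀ y : ℝ, 0 ≤ y → 0 ≤ f y)
    (hf_lip : ∀ u v : ℝ, 0 ≤ u → 0 ≤ v → |f u - f v| ≤ L * |u - v|)
    (hf_zero : f 0 = 0)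
    (hf_below : ∀ y : ℝ, 0 < y → y < K → y < f y)
    (hf_above : ∀ y : ℝ, K < y → 0 < f y ∧ f y < y)
    (M m xmax xmin : ℝ)
    (hM : M = sSup (f '' Icc (0 : ℝ) K))
    (hm : m = sInf (f '' Icc K M))
    (hMK : K < M)
    (hxmax_mem : xmax ∈ Icc (0 : ℝ) K) (hxmax_val : f xmax = M)
    (hxmax_greatest : ∀ y ∈ Icc (0 : ℝ) K, f y = M → y ≤ xmax)
    (hxmin_mem : xmin ∈ Icc K M) (hxmin_val : f xmin = m)
    (hxmin_least : ∀ y ∈ Icc K M, f y = m → xmin ≤ y)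
    (hm_lt : m < xmax) (hxmax_lt : xmax < K)
    :
    ∀ a b : ℝ, m < a → a < xmax → K < b → b < M → sInf (f '' Icc K b) < a →
      ∃ r : ℝ, 0 < r ∧
      ∃ h : ℝ → ℝ, Measurable h ∧ (∀ t : ℝ, 0 ≤ t → h t ≤ t) ∧
        Tendsto h atTop atTop ∧
      ∃ φ : ℝ → ℝ, ContinuousOn φ (Iic (0 : ℝ)) ∧
        (∃ C : ℝ, ∀ t : ℝ, t ≤ 0 → |φ t| ≤ C) ∧
        (∀ t : ℝ, t ≤ 0 → 0 ≤ φ t) ∧ 0 < φ 0 ∧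
      ∃ x : ℝ → ℝ, Continuous x ∧ (∀ t : ℝ, t ≤ 0 → x t = φ t) ∧
        (∀ t : ℝ, 0 ≤ t →
          x t = φ 0 + ∫ u in (0:ℝ)..t, r * (f (x (h u)) - x u)) ∧
        liminf x atTop = a ∧ limsup x atTop = b :=
  distributed_delay_attracting_set_sharp_general f K hK hf_cont hf_nonneg M m xmax hxmax_val
    hxmax_lt
end

section
/- Consider the Nicholson's blowflies equation with distributed delay under hypotheses (a2), (a4), (a5). If p ≤ δ, then every solution x with positive initial condition satisfies lim_{t→∞} x(t) = 0 (the population goes to extinction). -/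
open MeasureTheory Filter Set

/-!
With the integrating factor `exp (δ t)` the equation reads
`exp (δ t) x t = exp (δ T) x T + ∫_T^t exp (δ u) p G u du`, where `G u` is the `μ u`-average of
`f ∘ x`, `f y = y exp (-a y)`. As `G u ≥ 0` whenever `x ≥ 0` on the past, `x` stays positive, and
as `f ≤ 1 / a`, `x` is bounded. If eventually `x ≤ c`, then, since `h → ∞`, eventually
`G ≤ c / (1 + a c)`, so by `p ≤ δ` eventually `x ≤ c / (1 + a c) + ε`. For `L = limsup x` this
gives `L ≤ L / (1 + a L)`, hence `L = 0`.
-/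

open Real Topology

theorem exp_mul_eq_add_integral_of_eq_add_integral {x q : ℝ → ℝ} {δ a b : ℝ}
    (hq : IntervalIntegrable q volume a b)
    (hx : ∀ s ∈ uIcc a b, x s = x a + ∫ u in a..s, q u) :
    exp (δ * b) * x b = exp (δ * a) * x a + ∫ u in a..b, exp (δ * u) * (q u + δ * x u) := by
  set y : ℝ → ℝ := fun s => x a + ∫ u in a..s, q u with hy_def
  have hy : AbsolutelyContinuousOnInterval y a b :=
    (contDiffOn_const (c := x a)).absolutelyContinuousOnInterval.add
      (hq.absolutelyContinuousOnInterval_intervalIntegral left_mem_uIcc)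
  have hE : AbsolutelyContinuousOnInterval (fun u => exp (δ * u)) a b :=
    ContDiffOn.absolutelyContinuousOnInterval (by fun_prop)
  have hderiv : ∀ᵐ u, u ∈ uIoc a b →
      deriv y u * exp (δ * u) + y u * deriv (fun u => exp (δ * u)) u
        = exp (δ * u) * (q u + δ * x u) := by
    filter_upwards [hq.ae_hasDerivAt_integral] with u hu hmem
    have hmem' := uIoc_subset_uIcc hmem
    have hyu : HasDerivAt y (q u) u := (hu hmem' a left_mem_uIcc).const_add (x a)
    have hEu : HasDerivAt (fun u => exp (δ * u)) (exp (δ * u) * δ) u := by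
      simpa using ((hasDerivAt_id u).const_mul δ).exp
    rw [hyu.deriv, hEu.deriv, show y u = x u from (hx u hmem').symm]
    ring
  have hprod := hy.integral_deriv_mul_eq_sub hE
  rw [intervalIntegral.integral_congr_ae hderiv] at hprod
  simp only [hy_def, intervalIntegral.integral_same, add_zero, ← hx b right_mem_uIcc] at hprod
  linarith

theorem pos_of_forall_Ico_pos {x : ℝ → ℝ} (hx : Continuous x)
    (hstep : ∀ t, 0 ≤ t → (∀ s ∈ Ico 0 t, 0 < x s) → 0 < x t) :
    ∀ t, 0 ≤ t → 0 < x t := by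
  by_contra! ⟨t₁, ht₁, hxt₁⟩
  set S := Ici 0 ∩ x ⁻¹' Iic 0
  have hS : IsClosed S := isClosed_Ici.inter (isClosed_Iic.preimage hx)
  have hbdd : BddBelow S := ⟨0, fun s hs => hs.1⟩
  have hmem : sInf S ∈ S := hS.csInf_mem ⟨t₁, ht₁, hxt₁⟩ hbdd
  have hbefore : ∀ s ∈ Ico 0 (sInf S), 0 < x s := fun s hs =>
    not_le.1 fun hxs => hs.2.not_ge (csInf_le hbdd ⟨hs.1, hxs⟩)
  exact (hstep _ hmem.1 hbefore).not_ge hmem.2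

theorem integral_exp_mul_const (δ K T t : ℝ) (hδ : δ ≠ 0) :
    ∫ u in T..t, exp (δ * u) * K = K / δ * (exp (δ * t) - exp (δ * T)) := by
  rw [intervalIntegral.integral_mul_const, intervalIntegral.integral_comp_mul_left _ hδ,
    integral_exp]
  simp only [smul_eq_mul]
  field_simp

section LinearDecay

variable {x g : ℝ → ℝ} {δ : ℝ}

theorem exp_mul_eq_exp_mul_add_integral (hxc : Continuous x)
    (hg : ∀ t, 0 ≤ t → IntervalIntegrable g volume 0 t)
    (hx : ∀ t, 0 ≤ t → x t = x 0 + ∫ u in 0..t, (-(δ * x u) + g u))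
    {T t : ℝ} (hT : 0 ≤ T) (hTt : T ≤ t) :
    exp (δ * t) * x t = exp (δ * T) * x T + ∫ u in T..t, exp (δ * u) * g u := by
  have hq : ∀ s, 0 ≤ s → IntervalIntegrable (fun u => -(δ * x u) + g u) volume 0 s :=
    fun s hs => ((hxc.const_mul δ).neg.intervalIntegrable 0 s).add (hg s hs)
  have hxT : ∀ s ∈ uIcc T t, x s = x T + ∫ u in T..s, (-(δ * x u) + g u) := by
    intro s hs
    rw [uIcc_of_le hTt] at hs
    rw [hx s (hT.trans hs.1), hx T hT, ← intervalIntegral.integral_interval_sub_left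
      (hq s (hT.trans hs.1)) (hq T hT)]
    ring
  have hqT : IntervalIntegrable (fun u => -(δ * x u) + g u) volume T t :=
    (hq T hT).symm.trans (hq t (hT.trans hTt))
  simpa only [neg_add_cancel_comm] using exp_mul_eq_add_integral_of_eq_add_integral (δ := δ) hqT hxT

theorem le_exp_mul_add_div_of_forall_le (hδ : 0 < δ) (hxc : Continuous x)
    (hg : ∀ t, 0 ≤ t → IntervalIntegrable g volume 0 t)
    (hx : ∀ t, 0 ≤ t → x t = x 0 + ∫ u in 0..t, (-(δ * x u) + g u))
    {T t K : ℝ} (hK : 0 ≤ K) (hT : 0 ≤ T) (hTt : T ≤ t) (hgK : ∀ u ∈ Icc T t, g u ≤ K) :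
    x t ≤ exp (δ * (T - t)) * x T + K / δ := by
  have hgT : IntervalIntegrable g volume T t := (hg T hT).symm.trans (hg t (hT.trans hTt))
  have hint : ∫ u in T..t, exp (δ * u) * g u ≤ K / δ * exp (δ * t) :=
    calc ∫ u in T..t, exp (δ * u) * g u ≤ ∫ u in T..t, exp (δ * u) * K :=
          intervalIntegral.integral_mono_on hTt
            (hgT.continuousOn_mul (by fun_prop : Continuous fun u => exp (δ * u)).continuousOn)
            ((by fun_prop : Continuous fun u => exp (δ * u) * K).intervalIntegrable T t)
            fun u hu => mul_le_mul_of_nonneg_left (hgK u hu) (exp_pos _).le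
      _ = K / δ * (exp (δ * t) - exp (δ * T)) := integral_exp_mul_const δ K T t hδ.ne'
      _ ≤ K / δ * exp (δ * t) := by
          have := exp_pos (δ * T)
          gcongr
          linarith
  have hvoc := exp_mul_eq_exp_mul_add_integral hxc hg hx hT hTt
  have hexp : exp (δ * t) * exp (δ * (T - t)) = exp (δ * T) := by rw [← exp_add]; ring_nf
  refine le_of_mul_le_mul_left ?_ (exp_pos (δ * t))
  rw [mul_add, ← mul_assoc, hexp]
  linarith

theorem eventually_le_of_eventually_forcing_le (hδ : 0 < δ) (hxc : Continuous x)
    (hg : ∀ t, 0 ≤ t → IntervalIntegrable g volume 0 t)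
    (hx : ∀ t, 0 ≤ t → x t = x 0 + ∫ u in 0..t, (-(δ * x u) + g u))
    {K ε : ℝ} (hK : 0 ≤ K) (hε : 0 < ε) (hgK : ∀ᶠ u in atTop, g u ≤ δ * K) :
    ∀ᶠ t in atTop, x t ≤ K + ε := by
  obtain ⟨T₀, hT₀⟩ := eventually_atTop.1 hgK
  set T := max T₀ 0
  have hdecay : Tendsto (fun t => exp (δ * (T - t)) * x T) atTop (𝓝 0) := by
    have : Tendsto (fun t => δ * (T - t)) atTop atBot :=
      (tendsto_atBot_add_const_left _ T tendsto_neg_atTop_atBot).const_mul_atBot hδ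
    simpa using (tendsto_exp_atBot.comp this).mul_const (x T)
  filter_upwards [hdecay.eventually (ge_mem_nhds hε), eventually_ge_atTop T] with t hdt ht
  have := le_exp_mul_add_div_of_forall_le hδ hxc hg hx (by positivity) (le_max_right _ _) ht
    fun u hu => hT₀ u ((le_max_left _ _).trans hu.1)
  rw [mul_div_cancel_left₀ _ hδ.ne'] at this
  linarith

theorem pos_of_forcing_nonneg (hxc : Continuous x)
    (hg : ∀ t, 0 ≤ t → IntervalIntegrable g volume 0 t)
    (hx : ∀ t, 0 ≤ t → x t = x 0 + ∫ u in 0..t, (-(δ * x u) + g u)) (hx0 : 0 < x 0)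
    (hgpos : ∀ t, 0 ≤ t → (∀ s ∈ Ico 0 t, 0 < x s) → ∀ u ∈ Ico 0 t, 0 ≤ g u) :
    ∀ t, 0 ≤ t → 0 < x t := by
  refine pos_of_forall_Ico_pos hxc fun t ht hpos => ?_
  have hint : 0 ≤ ∫ u in 0..t, exp (δ * u) * g u := by
    rw [intervalIntegral.integral_of_le ht, integral_Ioc_eq_integral_Ioo]
    exact setIntegral_nonneg measurableSet_Ioo fun u hu =>
      mul_nonneg (exp_pos _).le (hgpos t ht hpos u ⟨hu.1.le, hu.2⟩)
  have hvoc := exp_mul_eq_exp_mul_add_integral hxc hg hx le_rfl ht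
  rw [mul_zero, exp_zero, one_mul] at hvoc
  exact pos_of_mul_pos_right (by linarith : 0 < exp (δ * t) * x t) (exp_pos _).le

end LinearDecay

theorem tendsto_zero_of_eventual_bound_improves {α : Type*} {l : Filter α} [l.NeBot] {x : α → ℝ}
    {m : ℝ → ℝ} (hm : ContinuousOn m (Ioi 0)) (hm_lt : ∀ c, 0 < c → m c < c)
    (hx0 : ∀ᶠ t in l, 0 ≤ x t) (hxB : ∃ B, ∀ᶠ t in l, x t ≤ B)
    (hstep : ∀ c, 0 < c → (∀ᶠ t in l, x t ≤ c) → ∀ ε, 0 < ε → ∀ᶠ t in l, x t ≤ m c + ε) :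
    Tendsto x l (𝓝 0) := by
  obtain ⟨B, hB⟩ := hxB
  have hbdd : IsBoundedUnder (· ≤ ·) l x := isBoundedUnder_of_eventually_le hB
  have hcobdd : IsCoboundedUnder (· ≤ ·) l x := isCoboundedUnder_le_of_eventually_le l hx0
  set L := limsup x l
  have hL0 : 0 ≤ L := le_limsup_of_frequently_le hx0.frequently hbdd
  have hLm : ∀ ε, 0 < ε → L ≤ m (L + ε) + ε := fun ε hε =>
    limsup_le_of_le hcobdd <| hstep (L + ε) (by positivity)
      ((eventually_lt_of_limsup_lt (by linarith) hbdd).mono fun _ h => h.le) ε hε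
  have hL : L = 0 := by
    by_contra hne
    have hLpos : 0 < L := lt_of_le_of_ne hL0 (Ne.symm hne)
    have hlim : Tendsto (fun ε => m (L + ε) + ε) (𝓝[>] 0) (𝓝 (m L)) := by
      have hshift : Tendsto (fun ε => L + ε) (𝓝[>] 0) (𝓝 L) := by
        simpa using ((tendsto_const_nhds (x := L)).add tendsto_id).mono_left
          (nhdsWithin_le_nhds (a := (0 : ℝ)))
      simpa using ((hm.continuousAt (Ioi_mem_nhds hLpos)).tendsto.comp hshift).add
        (tendsto_id.mono_left nhdsWithin_le_nhds)
    have := ge_of_tendsto hlim (eventually_nhdsWithin_of_forall hLm)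
    linarith [hm_lt L hLpos]
  refine tendsto_order.2 ⟨fun b hb => hx0.mono fun t ht => hb.trans_le ht, fun b hb => ?_⟩
  exact eventually_lt_of_limsup_lt (hL.trans_lt hb) hbdd

theorem mul_exp_neg_mul_le_inv {a : ℝ} (ha : 0 < a) (y : ℝ) : y * exp (-(a * y)) ≤ a⁻¹ := by
  calc y * exp (-(a * y)) = a⁻¹ * (a * y * exp (-(a * y))) := by field_simp
    _ ≤ a⁻¹ * 1 := by
        gcongr
        exact (mul_exp_neg_le_exp_neg_one _).trans (exp_le_one_iff.2 (by norm_num))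
    _ = a⁻¹ := mul_one _

theorem mul_exp_neg_mul_le_div_one_add {a y c : ℝ} (ha : 0 ≤ a) (hy : 0 ≤ y) (hyc : y ≤ c) :
    y * exp (-(a * y)) ≤ c / (1 + a * c) := by
  have hexp : 1 + a * y ≤ exp (a * y) := by linarith [add_one_le_exp (a * y)]
  calc y * exp (-(a * y)) ≤ y / (1 + a * y) := by
        rw [exp_neg, ← div_eq_mul_inv]
        exact div_le_div_of_nonneg_left hy (by positivity) hexp
    _ ≤ c / (1 + a * c) := by
        rw [div_le_div_iff₀ (by positivity) (by nlinarith)]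
        nlinarith

section DelayedAverage

variable {μ : ℝ → Measure ℝ}

theorem intervalIntegrable_integral_of_continuous
    (hμ_prob : ∀ u, 0 ≤ u → IsProbabilityMeasure (μ u))
    (hμ_le : ∀ u, 0 ≤ u → ∀ᵐ s ∂μ u, s ≤ u)
    (hμ_meas : ∀ g : ℝ → ℝ, Measurable g → (∃ C : ℝ, ∀ y : ℝ, |g y| ≤ C) →
      Measurable (fun t => ∫ s, g s ∂(μ t)))
    {y : ℝ → ℝ} (hy : Continuous y) {t C : ℝ} (ht : 0 ≤ t) (hyC : ∀ s ≤ t, |y s| ≤ C) :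
    IntervalIntegrable (fun u => ∫ s, y s ∂μ u) volume 0 t := by
  -- `y (min s t)` is globally bounded and agrees with `y` on the support of `μ u` for `u ≤ t`.
  set ytrunc : ℝ → ℝ := fun s => y (min s t)
  have hmeas : Measurable fun u => ∫ s, ytrunc s ∂μ u :=
    hμ_meas ytrunc (hy.comp (continuous_id.min continuous_const)).measurable
      ⟨C, fun s => hyC _ (min_le_right s t)⟩
  have hbound : ∀ u, 0 ≤ u → ‖∫ s, ytrunc s ∂μ u‖ ≤ C := fun u hu => by
    have := hμ_prob u hu
    simpa using norm_integral_le_of_norm_le_const (μ := μ u)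
      (Eventually.of_forall fun s => (by simpa using hyC _ (min_le_right s t) : ‖ytrunc s‖ ≤ C))
  have htrunc : IntegrableOn (fun u => ∫ s, ytrunc s ∂μ u) (Ioc 0 t) :=
    Measure.integrableOn_of_bounded measure_Ioc_lt_top.ne hmeas.aestronglyMeasurable
      ((ae_restrict_iff' measurableSet_Ioc).2 (Eventually.of_forall fun u hu => hbound u hu.1.le))
  rw [intervalIntegrable_iff_integrableOn_Ioc_of_le ht]
  refine htrunc.congr_fun (fun u hu => integral_congr_ae ?_) measurableSet_Ioc
  filter_upwards [hμ_le u hu.1.le] with s hs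
  simp only [ytrunc, min_eq_left (hs.trans hu.2)]

theorem eventually_integral_le_of_eventually_mem_Icc {h : ℝ → ℝ}
    (hh : Tendsto h atTop atTop) (hμ_prob : ∀ u, 0 ≤ u → IsProbabilityMeasure (μ u))
    (hμ_ge : ∀ u, 0 ≤ u → ∀ᵐ s ∂μ u, h u ≤ s)
    {y : ℝ → ℝ} {C : ℝ} (hy : ∀ᶠ s in atTop, y s ∈ Icc 0 C) :
    ∀ᶠ u in atTop, ∫ s, y s ∂μ u ≤ C := by
  obtain ⟨S, hS⟩ := eventually_atTop.1 hy
  filter_upwards [hh.eventually_ge_atTop S, eventually_ge_atTop 0] with u hSu hu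
  have := hμ_prob u hu
  have hae : ∀ᵐ s ∂μ u, y s ∈ Icc 0 C := (hμ_ge u hu).mono fun s hs => hS s (hSu.trans hs)
  calc ∫ s, y s ∂μ u ≤ ∫ _, C ∂μ u :=
        integral_mono_of_nonneg (hae.mono fun _ hs => hs.1) (integrable_const C)
          (hae.mono fun _ hs => hs.2)
    _ = C := by simp

end DelayedAverage

theorem exists_abs_comp_le_of_eqOn_Iic {x φ f : ℝ → ℝ} (hx : Continuous x) (hf : Continuous f)
    (hφ : ∃ C, ∀ s ≤ 0, |φ s| ≤ C) (hxφ : ∀ s ≤ 0, x s = φ s) (t : ℝ) :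
    ∃ C, ∀ s ≤ t, |f (x s)| ≤ C := by
  obtain ⟨C₁, hC₁⟩ := hφ
  obtain ⟨C₂, hC₂⟩ := (isCompact_Icc (a := 0) (b := t)).exists_bound_of_continuousOn hx.continuousOn
  obtain ⟨C, hC⟩ := (isCompact_Icc (a := -max C₁ C₂) (b := max C₁ C₂)).exists_bound_of_continuousOn
    hf.continuousOn
  refine ⟨C, fun s hs => hC _ (abs_le.1 ?_)⟩
  rcases le_total s 0 with hs0 | hs0
  · exact hxφ s hs0 ▸ (hC₁ s hs0).trans (le_max_left _ _)
  · exact (hC₂ s ⟨hs0, hs⟩).trans (le_max_right _ _)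

theorem nicholson_extinction_general
    (δ p a : ℝ) (hδ : 0 < δ) (hp : 0 < p) (ha : 0 < a)
    (h : ℝ → ℝ) (μ : ℝ → Measure ℝ) (φ : ℝ → ℝ)
    (hh_tend : Tendsto h atTop atTop)
    (hμ_prob : ∀ t : ℝ, 0 ≤ t → IsProbabilityMeasure (μ t))
    (hμ_supp : ∀ t : ℝ, 0 ≤ t → μ t (Icc (h t) t)ᶜ = 0)
    (hμ_meas : ∀ g : ℝ → ℝ, Measurable g → (∃ C : ℝ, ∀ y : ℝ, |g y| ≤ C) →
      Measurable (fun t => ∫ s, g s ∂(μ t)))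
    (hφ_bdd : ∃ C : ℝ, ∀ t : ℝ, t ≤ 0 → |φ t| ≤ C)
    (hφ_nonneg : ∀ t : ℝ, t ≤ 0 → 0 ≤ φ t)
    (hφ_pos : 0 < φ 0)
    (x : ℝ → ℝ)
    (hx_cont : Continuous x)
    (hx_init : ∀ t : ℝ, t ≤ 0 → x t = φ t)
    (hx_sol : ∀ t : ℝ, 0 ≤ t →
      x t = φ 0 + ∫ u in (0:ℝ)..t,
        (-(δ * x u) + p * ∫ s, x s * Real.exp (-(a * x s)) ∂(μ u)))
    (hpδ : p ≤ δ) :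
    Tendsto x atTop (nhds 0) := by
  set f : ℝ → ℝ := fun y => y * exp (-(a * y))
  have hsupp : ∀ u, 0 ≤ u → ∀ᵐ s ∂μ u, s ∈ Icc (h u) u := fun u hu => mem_ae_iff.2 (hμ_supp u hu)
  have hg : ∀ t, 0 ≤ t → IntervalIntegrable (fun u => p * ∫ s, f (x s) ∂μ u) volume 0 t := by
    intro t ht
    obtain ⟨C, hC⟩ := exists_abs_comp_le_of_eqOn_Iic (f := f) hx_cont (by fun_prop) hφ_bdd hx_init t
    exact (intervalIntegrable_integral_of_continuous hμ_prob
      (fun u hu => (hsupp u hu).mono fun _ hs => hs.2) hμ_meas (by fun_prop) ht hC).const_mul p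
  have hsol : ∀ t, 0 ≤ t → x t = x 0 + ∫ u in 0..t, (-(δ * x u) + p * ∫ s, f (x s) ∂μ u) := by
    rw [hx_init 0 le_rfl]
    exact hx_sol
  have hpos : ∀ t, 0 ≤ t → 0 < x t :=
    pos_of_forcing_nonneg hx_cont hg hsol (hx_init 0 le_rfl ▸ hφ_pos) fun t _ hxt u hu =>
      mul_nonneg hp.le <| integral_nonneg_of_ae <| (hsupp u hu.1).mono fun s hs => by
        rcases le_or_gt s 0 with hs0 | hs0
        · exact mul_nonneg (hx_init s hs0 ▸ hφ_nonneg s hs0) (exp_pos _).le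
        · exact mul_nonneg (hxt s ⟨hs0.le, hs.2.trans_lt hu.2⟩).le (exp_pos _).le
  have hnn : ∀ s, 0 ≤ x s := fun s =>
    (le_or_gt s 0).elim (fun hs => hx_init s hs ▸ hφ_nonneg s hs) fun hs => (hpos s hs.le).le
  have hbound : ∀ c, 0 ≤ c → (∀ᶠ s in atTop, f (x s) ≤ c) → ∀ ε, 0 < ε →
      ∀ᶠ t in atTop, x t ≤ c + ε := by
    intro c hc hfc ε hε
    have hG := eventually_integral_le_of_eventually_mem_Icc hh_tend hμ_prob
      (fun u hu => (hsupp u hu).mono fun _ hs => hs.1)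
      (hfc.mono fun s hs => ⟨mul_nonneg (hnn s) (exp_pos _).le, hs⟩)
    exact eventually_le_of_eventually_forcing_le hδ hx_cont hg hsol hc hε <| hG.mono fun u hu =>
      (mul_le_mul_of_nonneg_left hu hp.le).trans (mul_le_mul_of_nonneg_right hpδ hc)
  refine tendsto_zero_of_eventual_bound_improves (m := fun c => c / (1 + a * c)) ?_
    (fun c hc => div_lt_self hc (by nlinarith)) (Eventually.of_forall hnn)
    ⟨a⁻¹ + 1, hbound _ (inv_nonneg.2 ha.le)
      (Eventually.of_forall fun s => mul_exp_neg_mul_le_inv ha _) 1 one_pos⟩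
    fun c hc hxc ε hε => hbound _ (by positivity)
      (hxc.mono fun s hs => mul_exp_neg_mul_le_div_one_add ha.le (hnn s) hs) ε hε
  exact continuousOn_id.div (by fun_prop) fun c (hc : 0 < c) => by positivity

theorem nicholson_extinction
    (δ p a : ℝ) (hδ : 0 < δ) (hp : 0 < p) (ha : 0 < a)
    (h : ℝ → ℝ) (μ : ℝ → Measure ℝ) (φ : ℝ → ℝ)
    (hh_meas : Measurable h)
    (hh_le : ∀ t : ℝ, 0 ≤ t → h t ≤ t)
    (hh_tend : Tendsto h atTop atTop)
    (hμ_prob : ∀ t : ℝ, 0 ≤ t → IsProbabilityMeasure (μ t))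
    (hμ_supp : ∀ t : ℝ, 0 ≤ t → μ t (Icc (h t) t)ᶜ = 0)
    (hμ_meas : ∀ g : ℝ → ℝ, Measurable g → (∃ C : ℝ, ∀ y : ℝ, |g y| ≤ C) →
      Measurable (fun t => ∫ s, g s ∂(μ t)))
    (hφ_cont : ContinuousOn φ (Iic (0 : ℝ)))
    (hφ_bdd : ∃ C : ℝ, ∀ t : ℝ, t ≤ 0 → |φ t| ≤ C)
    (hφ_nonneg : ∀ t : ℝ, t ≤ 0 → 0 ≤ φ t)
    (hφ_pos : 0 < φ 0)
    (x : ℝ → ℝ)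
    (hx_cont : Continuous x)
    (hx_init : ∀ t : ℝ, t ≤ 0 → x t = φ t)
    (hx_sol : ∀ t : ℝ, 0 ≤ t →
      x t = φ 0 + ∫ u in (0:ℝ)..t,
        (-(δ * x u) + p * ∫ s, x s * Real.exp (-(a * x s)) ∂(μ u)))
    (hpδ : p ≤ δ) :
    Tendsto x atTop (nhds 0) :=
  nicholson_extinction_general δ p a hδ hp ha h μ φ hh_tend hμ_prob hμ_supp hμ_meas hφ_bdd hφ_nonneg
    hφ_pos x hx_cont hx_init hx_sol hpδ
end
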